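/- arXiv:2201.03724 — 10 statements merged into one kernel-verified Lean document; each statement's English description precedes it below -/
import Mathlib

section
/- Let A = [[a,b],[c,d]] be a 2×2 complex matrix with det(A) ≠ 0. Then there exist k ∈ ℂ and a pair (x,y) ∈ ℂ² with (x,y) ≠ (0,0) such that the unitary matrix U(x,y) = (1/√(|x|²+|y|²))·[[x,y],[-ȳ,x̄]] makes the product W = A·U(x,y), with entries w₁₁,w₁₂,w₂₁,w₂₂, satisfy w₂₁ = k·w₁₁ and w₂₂ = -k·w₁₂. Moreover k can be taken as follows: setting β = a·c̄ + b·d̄, if β = 0 then k = √((|c|²+|d|²)/(|a|²+|b|²)), and if β ≠ 0 then k = -√((|c|²+|d|²)/(|β|²(|a|²+|b|²)))·β̄; and one may take x = d - b·k and y = c̄ - ā·k̄. -/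
open Matrix Complex
open scoped ComplexConjugate

noncomputable section

/-- The unitary matrix `U(x,y) = (1/√(|x|²+|y|²))·[[x,y],[-ȳ,x̄]]`. -/
def Umat (x y : ℂ) : Matrix (Fin 2) (Fin 2) ℂ :=
  ((((Real.sqrt (normSq x + normSq y))⁻¹ : ℝ) : ℂ)) • !![x, y; -(conj y), conj x]

/-- Lemma on `R₁(A)`: for a nonsingular `A = [[a,b],[c,d]]` there are
`k` and `(x,y) ≠ (0,0)`, given by the explicit formulas of Definition 3, such that
`W = A·U(x,y)` satisfies `w₂₁ = k·w₁₁` and `w₂₂ = -k·w₁₂`. -/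
theorem stmt_5 (a b c d : ℂ) (hA : (!![a, b; c, d]).det ≠ 0) :
    ∃ k x y : ℂ,
      (x, y) ≠ (0, 0) ∧
      k = (if a * conj c + b * conj d = 0 then
            ((Real.sqrt ((normSq c + normSq d) / (normSq a + normSq b)) : ℝ) : ℂ)
          else
            -((Real.sqrt ((normSq c + normSq d) /
                (normSq (a * conj c + b * conj d) * (normSq a + normSq b))) : ℝ) : ℂ) *
              conj (a * conj c + b * conj d)) ∧
      x = d - b * k ∧
      y = conj c - conj a * conj k ∧
      (!![a, b; c, d] * Umat x y) 1 0 = k * (!![a, b; c, d] * Umat x y) 0 0 ∧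
      (!![a, b; c, d] * Umat x y) 1 1 = -k * (!![a, b; c, d] * Umat x y) 0 1 := by
  have hdet : a * d - b * c ≠ 0 := by
    intro h; apply hA; rw [Matrix.det_fin_two_of]; exact h
  have hab : (0:ℝ) ≤ normSq a + normSq b := add_nonneg (normSq_nonneg a) (normSq_nonneg b)
  have hcd : (0:ℝ) ≤ normSq c + normSq d := add_nonneg (normSq_nonneg c) (normSq_nonneg d)
  have hna : 0 < normSq a + normSq b := by
    rcases lt_or_eq_of_le hab with h | h
    · exact h
    · exfalso
      have := (add_eq_zero_iff_of_nonneg (normSq_nonneg a) (normSq_nonneg b)).mp h.symm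
      exact hdet (by simp [normSq_eq_zero.mp this.1, normSq_eq_zero.mp this.2])
  set k : ℂ := (if a * conj c + b * conj d = 0 then
            ((Real.sqrt ((normSq c + normSq d) / (normSq a + normSq b)) : ℝ) : ℂ)
          else
            -((Real.sqrt ((normSq c + normSq d) /
                (normSq (a * conj c + b * conj d) * (normSq a + normSq b))) : ℝ) : ℂ) *
              conj (a * conj c + b * conj d)) with hk
  have pa : ((normSq a : ℝ) : ℂ) = a * conj a := (Complex.mul_conj a).symm
  have pb : ((normSq b : ℝ) : ℂ) = b * conj b := (Complex.mul_conj b).symm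
  have pc : ((normSq c : ℝ) : ℂ) = c * conj c := (Complex.mul_conj c).symm
  have pd : ((normSq d : ℝ) : ℂ) = d * conj d := (Complex.mul_conj d).symm
  -- |k|² = (|c|²+|d|²)/(|a|²+|b|²)
  have hkk2 : k * conj k = (((normSq c + normSq d) / (normSq a + normSq b) : ℝ) : ℂ) := by
    rw [hk]
    split_ifs with h0
    · rw [Complex.conj_ofReal, ← Complex.ofReal_mul,
        Real.mul_self_sqrt (div_nonneg hcd hab)]
    · set β : ℂ := a * conj c + b * conj d with hβ
      have hβ0 : normSq β ≠ 0 := fun h => h0 (normSq_eq_zero.mp h)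
      rw [_root_.map_mul, map_neg, Complex.conj_ofReal, Complex.conj_conj]
      have e1 : (-((Real.sqrt ((normSq c + normSq d) / (normSq β * (normSq a + normSq b))) : ℝ) : ℂ) *
            conj β) * (-((Real.sqrt ((normSq c + normSq d) / (normSq β * (normSq a + normSq b))) : ℝ) : ℂ) * β)
          = (((Real.sqrt ((normSq c + normSq d) / (normSq β * (normSq a + normSq b))) *
              Real.sqrt ((normSq c + normSq d) / (normSq β * (normSq a + normSq b))) : ℝ)) : ℂ) * (β * conj β) := by
        push_cast; ring
      rw [e1, Real.mul_self_sqrt (div_nonneg hcd (mul_nonneg (normSq_nonneg β) hab)),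
        Complex.mul_conj, ← Complex.ofReal_mul]
      norm_cast
      field_simp
  have hkk : k * conj k * (a * conj a + b * conj b) = c * conj c + d * conj d := by
    rw [hkk2, ← pa, ← pb, ← pc, ← pd, ← Complex.ofReal_add, ← Complex.ofReal_add,
      ← Complex.ofReal_mul]
    norm_cast
    exact div_mul_cancel₀ _ hna.ne'
  -- kβ is real
  have hkb : k * (a * conj c + b * conj d) = conj k * conj (a * conj c + b * conj d) := by
    rw [hk]
    split_ifs with h0
    · simp [h0]
    · rw [_root_.map_mul, map_neg, Complex.conj_ofReal, Complex.conj_conj]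
      ring
  refine ⟨k, d - b * k, conj c - conj a * conj k, ?_, rfl, rfl, rfl, ?_, ?_⟩
  · intro h
    rw [Prod.mk.injEq] at h
    obtain ⟨h1, h2⟩ := h
    have h2' : c - a * k = 0 := by
      have := congrArg conj h2
      simpa using this
    exact hdet (by linear_combination a * h1 - b * h2')
  · rw [Umat, Matrix.mul_smul, Matrix.smul_apply, Matrix.smul_apply, smul_eq_mul, smul_eq_mul]
    have key : (!![a, b; c, d] * !![d - b * k, conj c - conj a * conj k;
        -(conj (conj c - conj a * conj k)), conj (d - b * k)]) 1 0 =
        k * (!![a, b; c, d] * !![d - b * k, conj c - conj a * conj k;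
        -(conj (conj c - conj a * conj k)), conj (d - b * k)]) 0 0 := by
      simp [Matrix.mul_apply, Fin.sum_univ_two]
      ring
    rw [key]; ring
  · rw [Umat, Matrix.mul_smul, Matrix.smul_apply, Matrix.smul_apply, smul_eq_mul, smul_eq_mul]
    have key : (!![a, b; c, d] * !![d - b * k, conj c - conj a * conj k;
        -(conj (conj c - conj a * conj k)), conj (d - b * k)]) 1 1 =
        -k * (!![a, b; c, d] * !![d - b * k, conj c - conj a * conj k;
        -(conj (conj c - conj a * conj k)), conj (d - b * k)]) 0 1 := by
      have hkb' : k * (a * conj c + b * conj d) = conj k * (conj a * c + conj b * d) := by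
        rw [hkb, map_add, _root_.map_mul, _root_.map_mul, Complex.conj_conj, Complex.conj_conj]
      simp [Matrix.mul_apply, Fin.sum_univ_two]
      linear_combination hkb' - hkk
    rw [key]; ring
end
end

section
/- Let A = [[α,0],[0,0]] be a 2×2 complex matrix with α ≠ 0, and let B be a nonzero 2×2 complex matrix with det(B) = 0. Then there exists (x,y) ∈ ℂ² with (x,y) ≠ (0,0) such that, with U = U(x,y) = (1/√(|x|²+|y|²))·[[x,y],[-ȳ,x̄]] and Z = diag(1,-1), there is a nonzero row vector v ∈ ℂ² for which all four rows of the two matrices A·U and B·U·Z are complex scalar multiples of v. -/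
/-!
Since `det B = 0`, every row of `B` is a multiple of one row vector `w`, so every row of
`B·U·Z` is a multiple of `w·U·Z`, while the rows of `A·U` are multiples of the first row
`(x, y)` of `U`. It therefore suffices to choose `(x, y)` with `w·U·Z` proportional to `(x, y)`,
which is the single equation `2 w₀ x y + w₁ (|x|² - |y|²) = 0`. For `w₀ ≠ 0` it is solved by
`x = w̄₀ (|w₀| + √(|w₀|² + |w₁|²))`, `y = -|w₀| w₁`, and for `w₀ = 0` by `x = y = 1`.
-/

open Matrix Complex
open scoped ComplexConjugate

noncomputable section

variable {K : Type*} [Field K]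

theorem exists_eq_smul_of_mul_sub_mul_eq_zero {u v : Fin 2 → K} (hv : v ≠ 0)
    (h : u 0 * v 1 - u 1 * v 0 = 0) : ∃ c : K, u = c • v := by
  obtain ⟨p, hp, hpM⟩ : ∃ p ≠ 0, p ᵥ* !![u 0, u 1; v 0, v 1] = 0 := by
    rw [exists_vecMul_eq_zero_iff, det_fin_two_of, h]
  have hrow (j : Fin 2) : p 0 * u j + p 1 * v j = 0 := by
    fin_cases j
    · simpa [vecMul, dotProduct] using congrFun hpM 0
    · simpa [vecMul, dotProduct] using congrFun hpM 1
  have hp0 : p 0 ≠ 0 := by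
    intro hp0
    have hp1 : p 1 ≠ 0 := fun hp1 => hp (funext fun i => by fin_cases i <;> assumption)
    exact hv (funext fun j => by simpa [hp0, hp1] using hrow j)
  refine ⟨-p 1 / p 0, funext fun j => ?_⟩
  simp only [Pi.smul_apply, smul_eq_mul]
  field_simp
  linear_combination hrow j

theorem Matrix.exists_rows_eq_smul_of_det_eq_zero {B : Matrix (Fin 2) (Fin 2) K}
    (hB : B.det = 0) : ∃ w : Fin 2 → K, ∀ r, ∃ d : K, B r = d • w := by
  by_cases h0 : B 0 = 0
  · refine ⟨B 1, fun r => ?_⟩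
    fin_cases r
    · exact ⟨0, by simpa using h0⟩
    · exact ⟨1, (one_smul K _).symm⟩
  · obtain ⟨c, hc⟩ := exists_eq_smul_of_mul_sub_mul_eq_zero (u := B 1) h0
      (by rw [det_fin_two] at hB; linear_combination -hB)
    refine ⟨B 0, fun r => ?_⟩
    fin_cases r
    · exact ⟨1, (one_smul K _).symm⟩
    · exact ⟨c, hc⟩

theorem exists_two_mul_mul_mul_add_mul_normSq_sub_eq_zero (a b : ℂ) :
    ∃ x y : ℂ, x ≠ 0 ∧ 2 * a * x * y + b * (normSq x - normSq y) = 0 := by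
  by_cases ha : a = 0
  · exact ⟨1, 1, one_ne_zero, by simp [ha]⟩
  set n := Real.sqrt (‖a‖ ^ 2 + ‖b‖ ^ 2)
  have hn : (n : ℂ) ^ 2 = ‖a‖ ^ 2 + ‖b‖ ^ 2 := by
    exact_mod_cast Real.sq_sqrt (by positivity)
  have hpos : 0 < ‖a‖ + n := add_pos_of_pos_of_nonneg (norm_pos_iff.mpr ha) (Real.sqrt_nonneg _)
  refine ⟨conj a * (‖a‖ + n : ℝ), -(‖a‖ * b), ?_, ?_⟩
  · exact mul_ne_zero ((map_ne_zero _).mpr ha) (ofReal_ne_zero.mpr hpos.ne')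
  · rw [← mul_conj, ← mul_conj]
    simp only [map_mul, map_neg, conj_conj, conj_ofReal]
    push_cast
    linear_combination
      b * (n ^ 2 - ‖a‖ ^ 2 : ℂ) * mul_conj' a - ‖a‖ ^ 2 * b * mul_conj' b + ‖a‖ ^ 2 * b * hn

theorem exists_vecMul_mul_diag_eq_smul (w : Fin 2 → ℂ) :
    ∃ x y : ℂ, x ≠ 0 ∧ ∃ c : ℂ,
      w ᵥ* (!![x, y; -(conj y), conj x] * !![(1 : ℂ), 0; 0, -1]) = c • ![x, y] := by
  obtain ⟨x, y, hx, hxy⟩ := exists_two_mul_mul_mul_add_mul_normSq_sub_eq_zero (w 0) (w 1)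
  refine ⟨x, y, hx, exists_eq_smul_of_mul_sub_mul_eq_zero (by simp [hx]) ?_⟩
  rw [← mul_conj, ← mul_conj] at hxy
  simp [vecMul, dotProduct, Fin.sum_univ_two]
  linear_combination hxy

theorem stmt_6_general (α : ℂ) (B : Matrix (Fin 2) (Fin 2) ℂ)
    (hdet : B.det = 0) :
    ∃ x y : ℂ, (x, y) ≠ (0, 0) ∧
      ∃ v : Fin 2 → ℂ, v ≠ 0 ∧
        (∀ r : Fin 2, ∃ c : ℂ, (!![α, 0; 0, 0] * Umat x y) r = c • v) ∧
        (∀ r : Fin 2, ∃ c : ℂ, (B * Umat x y * !![(1 : ℂ), 0; 0, -1]) r = c • v) := by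
  obtain ⟨w, hB⟩ := B.exists_rows_eq_smul_of_det_eq_zero hdet
  obtain ⟨x, y, hx, c, hc⟩ := exists_vecMul_mul_diag_eq_smul w
  set s : ℂ := (((Real.sqrt (normSq x + normSq y))⁻¹ : ℝ) : ℂ)
  have hU : Umat x y = s • !![x, y; -(conj y), conj x] := rfl
  refine ⟨x, y, by simp [hx], ![x, y], by simp [hx], fun r => ?_, fun r => ?_⟩
  · fin_cases r
    · exact ⟨α * s, by ext j; fin_cases j <;> simp [hU, mul_assoc]⟩
    · exact ⟨0, by ext j; fin_cases j <;> simp [hU]⟩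
  · obtain ⟨d, hd⟩ := hB r
    refine ⟨d * s * c, ?_⟩
    rw [mul_assoc, mul_apply_eq_vecMul, hd, hU, Matrix.smul_mul, smul_vecMul, vecMul_smul, hc,
      smul_smul, smul_smul, mul_assoc]

/-- Lemma on two matrices: for `A = [[α,0],[0,0]]` with `α ≠ 0` and a nonzero
`B` with `det B = 0`, there is `(x,y) ≠ (0,0)` such that all four rows of `A·U(x,y)` and
`B·U(x,y)·Z` are multiples of a single nonzero row vector, where `Z = diag(1,-1)`. -/
theorem stmt_6 (α : ℂ) (hα : α ≠ 0) (B : Matrix (Fin 2) (Fin 2) ℂ)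
    (hB : B ≠ 0) (hdet : B.det = 0) :
    ∃ x y : ℂ, (x, y) ≠ (0, 0) ∧
      ∃ v : Fin 2 → ℂ, v ≠ 0 ∧
        (∀ r : Fin 2, ∃ c : ℂ, (!![α, 0; 0, 0] * Umat x y) r = c • v) ∧
        (∀ r : Fin 2, ∃ c : ℂ, (B * Umat x y * !![(1 : ℂ), 0; 0, -1]) r = c • v) :=
  stmt_6_general α B hdet
end
end

section
/- Let φ = ξ₀|00⟩+ξ₁|01⟩+ξ₂|10⟩+ξ₃|11⟩ be a unit vector in ℂ⁴ and let T(φ) = [[ξ₀,ξ₁],[ξ₂,ξ₃]]. If det(T(φ)) = 0, then there exist 2×2 unitary matrices K₁ and K₂ such that (K₁ ⊗ K₂)φ = |00⟩. -/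
open Matrix Complex
open scoped ComplexConjugate

noncomputable section

/-- bit of qubit 1 (leftmost) in the index `2a+b`. -/
def bitHi (i : Fin 4) : Fin 2 := ⟨i.val / 2, by have := i.isLt; omega⟩
/-- bit of qubit 0 (rightmost). -/
def bitLo (i : Fin 4) : Fin 2 := ⟨i.val % 2, by omega⟩

/-- Kronecker product `U ⊗ V` acting on `ℂ⁴`, with `|ab⟩` at index `2a+b`. -/
def kron2 (U V : Matrix (Fin 2) (Fin 2) ℂ) : Matrix (Fin 4) (Fin 4) ℂ :=
  fun i j => U (bitHi i) (bitHi j) * V (bitLo i) (bitLo j)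

/-- The controlled-Z gate on two qubits. -/
def czGate : Matrix (Fin 4) (Fin 4) ℂ := diagonal ![1, 1, 1, -1]

/-- The matrix `T(φ)` of a 2-qubit state vector. -/
def Tmat (φ : Fin 4 → ℂ) : Matrix (Fin 2) (Fin 2) ℂ := !![φ 0, φ 1; φ 2, φ 3]

/-- The basis state `|00⟩` in `ℂ⁴`. -/
def e00 : Fin 4 → ℂ := ![1, 0, 0, 0]

/-!
When `det T(φ) = 0` the rows of `T(φ)` are proportional, so `φ` is a product state `u ⊗ v`. On `ℂ²`, the matrix `[[w̄₀, w̄₁], [-w₁, w₀]]` is `‖w‖` times a unitary and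
sends `w` to `‖w‖² e₀`, so unitaries `K₁, K₂` with `K₁ u = ‖u‖ e₀` and `K₂ v = ‖v‖ e₀` give
`(K₁ ⊗ K₂)(u ⊗ v) = ‖u‖ ‖v‖ |00⟩ = ‖φ‖ |00⟩ = |00⟩`.
-/

def prodState (u v : Fin 2 → ℂ) : Fin 4 → ℂ := fun i => u (bitHi i) * v (bitLo i)

@[simp] lemma prodState_apply_zero (u v : Fin 2 → ℂ) : prodState u v 0 = u 0 * v 0 := rfl
@[simp] lemma prodState_apply_one (u v : Fin 2 → ℂ) : prodState u v 1 = u 0 * v 1 := rfl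
@[simp] lemma prodState_apply_two (u v : Fin 2 → ℂ) : prodState u v 2 = u 1 * v 0 := rfl
@[simp] lemma prodState_apply_three (u v : Fin 2 → ℂ) : prodState u v 3 = u 1 * v 1 := rfl

lemma kron2_mulVec_prodState (U V : Matrix (Fin 2) (Fin 2) ℂ) (u v : Fin 2 → ℂ) :
    kron2 U V *ᵥ prodState u v = prodState (U *ᵥ u) (V *ᵥ v) := by
  ext i
  fin_cases i <;> simp [kron2, bitHi, bitLo, mulVec, dotProduct, Fin.sum_univ_four] <;> ring

lemma sum_norm_sq_prodState (u v : Fin 2 → ℂ) :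
    ∑ i, ‖prodState u v i‖ ^ 2 = (∑ i, ‖u i‖ ^ 2) * ∑ i, ‖v i‖ ^ 2 := by
  simp only [Fin.sum_univ_four, Fin.sum_univ_two, prodState_apply_zero, prodState_apply_one,
    prodState_apply_two, prodState_apply_three, norm_mul]
  ring

lemma prodState_single_zero (r s : ℂ) :
    prodState (Pi.single 0 r) (Pi.single 0 s) = (r * s) • e00 := by
  ext i; fin_cases i <;> simp [e00]

lemma exists_prodState_of_det_eq_zero (φ : Fin 4 → ℂ) (h : (Tmat φ).det = 0) :
    ∃ u v, φ = prodState u v := by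
  rw [Tmat, det_fin_two_of] at h
  by_cases h0 : φ 0 = 0
  · by_cases h1 : φ 1 = 0
    · exact ⟨![0, 1], ![φ 2, φ 3], by ext i; fin_cases i <;> simp [h0, h1]⟩
    · have h2 : φ 2 = 0 := by simpa [h0, h1] using h
      refine ⟨![1, φ 3 / φ 1], ![φ 0, φ 1], ?_⟩
      ext i; fin_cases i <;> simp [h0, h1, h2]
  · refine ⟨![1, φ 2 / φ 0], ![φ 0, φ 1], ?_⟩
    ext i; fin_cases i <;> simp [h0]
    field_simp
    linear_combination h

def rotOf (w : Fin 2 → ℂ) : Matrix (Fin 2) (Fin 2) ℂ :=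
  !![conj (w 0), conj (w 1); -(w 1), w 0]

lemma rotOf_mulVec_self (w : Fin 2 → ℂ) :
    rotOf w *ᵥ w = Pi.single 0 ((∑ i, ‖w i‖ ^ 2 : ℝ) : ℂ) := by
  ext i; fin_cases i <;> simp [rotOf, mulVec, dotProduct, Fin.sum_univ_two, ← Complex.conj_mul']
  all_goals ring

lemma conjTranspose_rotOf_mul_self (w : Fin 2 → ℂ) :
    (rotOf w)ᴴ * rotOf w = ((∑ i, ‖w i‖ ^ 2 : ℝ) : ℂ) • 1 := by
  ext i j
  fin_cases i <;> fin_cases j <;>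
    simp [rotOf, mul_apply, Fin.sum_univ_two, ← Complex.conj_mul']
  all_goals ring

lemma exists_unitary_mulVec_eq_single_zero (w : Fin 2 → ℂ) :
    ∃ U ∈ unitaryGroup (Fin 2) ℂ, U *ᵥ w = Pi.single 0 (√(∑ i, ‖w i‖ ^ 2) : ℂ) := by
  set N := ∑ i, ‖w i‖ ^ 2
  rcases (show 0 ≤ N by positivity).eq_or_lt with hN | hN
  · have hw : w = 0 := by
      ext i
      simpa using (Finset.sum_eq_zero_iff_of_nonneg (fun i _ => by positivity)).mp hN.symm i
    exact ⟨1, one_mem _, by simp [hw, ← hN]⟩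
  have hr : (√N : ℂ) ≠ 0 := by exact_mod_cast (Real.sqrt_pos.mpr hN).ne'
  have hr2 : (√N : ℂ) * √N = N := by exact_mod_cast Real.mul_self_sqrt hN.le
  refine ⟨(√N : ℂ)⁻¹ • rotOf w, ?_, ?_⟩
  · rw [mem_unitaryGroup_iff', star_eq_conjTranspose, conjTranspose_smul, smul_mul_smul_comm,
      conjTranspose_rotOf_mul_self, smul_smul, star_inv₀, Complex.star_def, Complex.conj_ofReal,
      ← hr2]
    field_simp
    simp
  · rw [smul_mulVec, rotOf_mulVec_self, ← Pi.single_smul, ← hr2, smul_eq_mul,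
      inv_mul_cancel_left₀ hr]

/-- a 2-qubit state `φ` with `det T(φ) = 0` can be taken to `|00⟩`
by a local gate `K₁ ⊗ K₂`. -/
theorem stmt_7 (φ : Fin 4 → ℂ) (hunit : ∑ i, ‖φ i‖ ^ 2 = 1)
    (hdet : (Tmat φ).det = 0) :
    ∃ K₁ ∈ Matrix.unitaryGroup (Fin 2) ℂ, ∃ K₂ ∈ Matrix.unitaryGroup (Fin 2) ℂ,
      (kron2 K₁ K₂).mulVec φ = e00 := by
  obtain ⟨u, v, rfl⟩ := exists_prodState_of_det_eq_zero φ hdet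
  obtain ⟨K₁, hK₁, hu⟩ := exists_unitary_mulVec_eq_single_zero u
  obtain ⟨K₂, hK₂, hv⟩ := exists_unitary_mulVec_eq_single_zero v
  refine ⟨K₁, hK₁, K₂, hK₂, ?_⟩
  rw [kron2_mulVec_prodState, hu, hv, prodState_single_zero, ← Complex.ofReal_mul,
    ← Real.sqrt_mul (by positivity), ← sum_norm_sq_prodState, hunit, Real.sqrt_one,
    Complex.ofReal_one, one_smul]
end
end

section
/- Let φ be a unit vector in ℂ⁴. Then there exist 2×2 unitary matrices K₁, K₂ and W₁ such that (K₁ ⊗ K₂)·cz·(I ⊗ W₁)·φ = |00⟩, where I is the 2×2 identity matrix. In other words, every 2-qubit state can be prepared using local gates and at most one controlled-Z gate. -/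
open Matrix Complex
open scoped ComplexConjugate

noncomputable section

/-!
Write `T(ψ)` for the `2 × 2` coefficient matrix of `ψ`. The state `ψ` is a product state
`u ⊗ w` exactly when `det T(ψ) = 0`, and a product of unit vectors is sent to `|00⟩` by a local
gate `K₁ ⊗ K₂`. So it suffices to find a local `W₁` such that `ψ = cz · (I ⊗ W₁) · φ` has
`det T(ψ) = 0`; `ψ` is automatically a unit vector, because `cz` and `I ⊗ W₁` are unitary.

For `W₁ = !![ā, b̄; -b, a]` with `|a|² + |b|² = 1` the determinant is
`z p - z̄ q - t r`, where `(z, t) = (2 ā b, |a|² - |b|²)` is the Hopf map and `p, q, r` are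
quadratic in `φ`. The equation `z p - z̄ q = t r` is `ℝ`-linear in `(z, t) ∈ ℂ × ℝ ≅ ℝ³` with
values in `ℂ ≅ ℝ²`, so it has a solution on the unit sphere, and the Hopf map is onto the sphere.
-/

open scoped Kronecker

lemma dotProduct_star_self_eq_sum_norm_sq {𝕜 n : Type*} [RCLike 𝕜] [Fintype n] (v : n → 𝕜) :
    star v ⬝ᵥ v = ((∑ i, ‖v i‖ ^ 2 : ℝ) : 𝕜) := by
  simp [dotProduct, RCLike.conj_mul]

lemma dotProduct_star_mulVec_self_of_mem_unitaryGroup {α n : Type*} [CommRing α] [StarRing α]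
    [Fintype n] [DecidableEq n] {U : Matrix n n α} (hU : U ∈ unitaryGroup n α) (v : n → α) :
    star (U *ᵥ v) ⬝ᵥ (U *ᵥ v) = star v ⬝ᵥ v := by
  rw [star_mulVec, ← dotProduct_mulVec, mulVec_mulVec, ← star_eq_conjTranspose,
    Unitary.star_mul_self_of_mem hU, one_mulVec]

lemma reindex_mem_unitaryGroup {α m n : Type*} [CommRing α] [StarRing α] [Fintype m]
    [DecidableEq m] [Fintype n] [DecidableEq n] (e : m ≃ n) {U : Matrix m m α}
    (hU : U ∈ unitaryGroup m α) : reindex e e U ∈ unitaryGroup n α := by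
  rw [mem_unitaryGroup_iff, star_eq_conjTranspose, conjTranspose_reindex,
    ← coe_reindexAlgEquiv α α, ← map_mul, ← star_eq_conjTranspose, mem_unitaryGroup_iff.mp hU,
    map_one]

def tensor (u w : Fin 2 → ℂ) : Fin 4 → ℂ := fun i => u (bitHi i) * w (bitLo i)

/-- `finProdFinEquiv` sends `(a, b)` to `2a + b`, the index convention of `kron2`. -/
lemma kron2_eq_reindex_kronecker (U V : Matrix (Fin 2) (Fin 2) ℂ) :
    kron2 U V = reindex (finProdFinEquiv : Fin 2 × Fin 2 ≃ Fin 4) finProdFinEquiv (U ⊗ₖ V) :=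
  rfl

lemma kron2_mem_unitaryGroup {U V : Matrix (Fin 2) (Fin 2) ℂ}
    (hU : U ∈ unitaryGroup (Fin 2) ℂ) (hV : V ∈ unitaryGroup (Fin 2) ℂ) :
    kron2 U V ∈ unitaryGroup (Fin 4) ℂ := by
  rw [kron2_eq_reindex_kronecker]
  exact reindex_mem_unitaryGroup _ (kronecker_mem_unitary hU hV)

lemma kron2_mulVec_tensor (U V : Matrix (Fin 2) (Fin 2) ℂ) (u w : Fin 2 → ℂ) :
    kron2 U V *ᵥ tensor u w = tensor (U *ᵥ u) (V *ᵥ w) := by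
  ext i
  fin_cases i <;>
    simp [kron2, tensor, mulVec, dotProduct, Fin.sum_univ_four, bitHi, bitLo] <;> ring

lemma tensor_one_zero_eq_e00 : tensor ![1, 0] ![1, 0] = e00 := by
  ext i
  fin_cases i <;> simp [tensor, e00, bitHi, bitLo]

lemma czGate_mem_unitaryGroup : czGate ∈ unitaryGroup (Fin 4) ℂ := by
  rw [mem_unitaryGroup_iff, czGate, star_eq_conjTranspose, diagonal_conjTranspose,
    diagonal_mul_diagonal, ← diagonal_one]
  congr 1
  ext i
  fin_cases i <;> simp

lemma dotProduct_star_self_fin_two (u : Fin 2 → ℂ) :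
    star u ⬝ᵥ u = conj (u 0) * u 0 + conj (u 1) * u 1 := by
  simp [dotProduct, Fin.sum_univ_two]

def suTwo (u : Fin 2 → ℂ) : Matrix (Fin 2) (Fin 2) ℂ :=
  !![conj (u 0), conj (u 1); -u 1, u 0]

lemma suTwo_mem_unitaryGroup {u : Fin 2 → ℂ} (hu : star u ⬝ᵥ u = 1) :
    suTwo u ∈ unitaryGroup (Fin 2) ℂ := by
  rw [dotProduct_star_self_fin_two] at hu
  rw [mem_unitaryGroup_iff]
  ext i j
  fin_cases i <;> fin_cases j <;> simp [suTwo, mul_apply, Fin.sum_univ_two] <;>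
    first | linear_combination hu | ring

lemma suTwo_mulVec_self {u : Fin 2 → ℂ} (hu : star u ⬝ᵥ u = 1) :
    suTwo u *ᵥ u = ![1, 0] := by
  rw [dotProduct_star_self_fin_two] at hu
  ext i
  fin_cases i <;> simp [suTwo, mulVec, dotProduct, Fin.sum_univ_two] <;>
    first | linear_combination hu | ring

lemma exists_eq_tensor_of_det_Tmat_eq_zero {n : Fin 4 → ℂ} (hdet : (Tmat n).det = 0)
    (hn : star n ⬝ᵥ n = 1) :
    ∃ u w : Fin 2 → ℂ, star u ⬝ᵥ u = 1 ∧ star w ⬝ᵥ w = 1 ∧ n = tensor u w := by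
  rw [Tmat, det_fin_two_of] at hdet
  simp only [dotProduct, Fin.sum_univ_four, Pi.star_apply, RCLike.star_def] at hn
  by_cases h01 : n 0 = 0 ∧ n 1 = 0
  · refine ⟨![0, 1], ![n 2, n 3], by simp [dotProduct], ?_, ?_⟩
    · simpa [dotProduct, h01] using hn
    · ext i
      fin_cases i <;> simp [tensor, bitHi, bitLo, h01]
  have hpos : 0 < normSq (n 0) + normSq (n 1) := by
    rcases not_and_or.mp h01 with h | h
    · linarith [normSq_pos.mpr h, normSq_nonneg (n 1)]
    · linarith [normSq_pos.mpr h, normSq_nonneg (n 0)]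
  set s := √(normSq (n 0) + normSq (n 1))
  have hs : (s : ℂ) ≠ 0 := ofReal_ne_zero.mpr (Real.sqrt_pos.mpr hpos).ne'
  have hs2 : (s : ℂ) ^ 2 = conj (n 0) * n 0 + conj (n 1) * n 1 := by
    rw [← ofReal_pow, Real.sq_sqrt hpos.le]
    push_cast [normSq_eq_conj_mul_self]
    ring
  -- `w` is the first row `r₀` normalized; as `det = 0`, the second row is `(⟪r₀, r₁⟫ / s) • w`.
  refine ⟨![s, (conj (n 0) * n 2 + conj (n 1) * n 3) / s], ![n 0 / s, n 1 / s], ?_, ?_, ?_⟩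
  · simp only [dotProduct_star_self_fin_two, cons_val_zero, cons_val_one, cons_val_fin_one,
      map_div₀, map_add, map_mul, conj_ofReal, conj_conj]
    field_simp
    linear_combination ((s : ℂ) ^ 2 + conj (n 0) * n 0 + conj (n 1) * n 1 - 1) * hs2 +
      (conj (n 0) * n 0 + conj (n 1) * n 1) * hn -
      (conj (n 0) * conj (n 3) - conj (n 1) * conj (n 2)) * hdet
  · simp only [dotProduct_star_self_fin_two, cons_val_zero, cons_val_one, cons_val_fin_one,
      map_div₀, conj_ofReal]
    field_simp
    exact hs2.symm
  · ext i
    fin_cases i <;> simp [tensor, bitHi, bitLo] <;> field_simp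
    · linear_combination n 2 * hs2 - conj (n 1) * hdet
    · linear_combination n 3 * hs2 + conj (n 0) * hdet

lemma exists_sphere_mul_sub_conj_mul_eq_mul (p q r : ℂ) :
    ∃ (z : ℂ) (t : ℝ), normSq z + t ^ 2 = 1 ∧ z * p - conj z * q = t * r := by
  let L : ℂ × ℝ →ₗ[ℝ] ℂ :=
    (LinearMap.mulRight ℝ p - (LinearMap.mulRight ℝ q).comp conjAe.toLinearMap).coprod
      (-LinearMap.toSpanSingleton ℝ ℂ r)
  have hL (z : ℂ) (t : ℝ) : L (z, t) = z * p - conj z * q - t * r := by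
    simp [L, Complex.real_smul, sub_eq_add_neg]
  -- `dim_ℝ ℂ = 2 < 3 = dim_ℝ (ℂ × ℝ)`
  have hker : LinearMap.ker L ≠ ⊥ := LinearMap.ker_ne_bot_of_finrank_lt (by simp)
  obtain ⟨⟨z, t⟩, hzt, hne⟩ := Submodule.exists_mem_ne_zero_of_ne_bot hker
  rw [LinearMap.mem_ker, hL, sub_eq_zero] at hzt
  have hpos : 0 < normSq z + t ^ 2 := by
    rcases eq_or_ne z 0 with rfl | hz
    · have ht : t ≠ 0 := fun ht => hne (by simp [ht])
      simp only [map_zero, zero_add]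
      positivity
    · have := normSq_pos.mpr hz
      positivity
  set s := √(normSq z + t ^ 2)
  have hs : s ≠ 0 := (Real.sqrt_pos.mpr hpos).ne'
  have hsC : (s : ℂ) ≠ 0 := ofReal_ne_zero.mpr hs
  have hs2 : s ^ 2 = normSq z + t ^ 2 := Real.sq_sqrt hpos.le
  refine ⟨z / s, t / s, ?_, ?_⟩
  · rw [normSq_div, normSq_ofReal]
    field_simp
    linarith
  · push_cast
    rw [map_div₀, conj_ofReal]
    field_simp
    linear_combination hzt

lemma exists_hopf_preimage {z : ℂ} {t : ℝ} (h : normSq z + t ^ 2 = 1) :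
    ∃ a b : ℂ, normSq a + normSq b = 1 ∧ 2 * conj a * b = z ∧ normSq a - normSq b = t := by
  rcases eq_or_ne t (-1) with rfl | ht
  · refine ⟨0, 1, by simp, ?_, by simp⟩
    have : normSq z = 0 := by linarith
    simp_all
  · have ht' : 0 < 1 + t := by
      have hle : -1 ≤ t :=
        (abs_le.mp ((sq_le_one_iff_abs_le_one t).mp (by linarith [normSq_nonneg z]))).1
      linarith [lt_of_le_of_ne hle (Ne.symm ht)]
    set α := √((1 + t) / 2)
    have hα : α ≠ 0 := (Real.sqrt_pos.mpr (by positivity)).ne'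
    have hαC : (α : ℂ) ≠ 0 := ofReal_ne_zero.mpr hα
    have hα2 : α ^ 2 = (1 + t) / 2 := Real.sq_sqrt (by positivity)
    have hβ : normSq (z / (2 * α : ℝ)) = (1 - t) / 2 := by
      rw [normSq_div, normSq_ofReal, (by linarith : normSq z = 1 - t ^ 2)]
      field_simp
      linear_combination (2 * t - 2) * hα2
    refine ⟨α, z / (2 * α : ℝ), ?_, ?_, ?_⟩
    · rw [hβ, normSq_ofReal]; nlinarith
    · rw [conj_ofReal]; push_cast; field_simp
    · rw [hβ, normSq_ofReal]; nlinarith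

lemma det_Tmat_czGate_mulVec_kron2_suTwo (a b : ℂ) (φ : Fin 4 → ℂ) :
    (Tmat (czGate *ᵥ kron2 1 (suTwo ![a, b]) *ᵥ φ)).det =
      2 * conj a * b * (φ 0 * φ 2) - conj (2 * conj a * b) * (φ 1 * φ 3) -
        (conj a * a - conj b * b) * (φ 0 * φ 3 + φ 1 * φ 2) := by
  simp [Tmat, det_fin_two_of, czGate, kron2, suTwo, mulVec, dotProduct, Fin.sum_univ_four,
    bitHi, bitLo, one_apply, map_ofNat]
  ring

lemma exists_mem_unitaryGroup_det_Tmat_czGate_mulVec_eq_zero (φ : Fin 4 → ℂ) :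
    ∃ W ∈ unitaryGroup (Fin 2) ℂ, (Tmat (czGate *ᵥ kron2 1 W *ᵥ φ)).det = 0 := by
  obtain ⟨z, t, hzt, hroot⟩ :=
    exists_sphere_mul_sub_conj_mul_eq_mul (φ 0 * φ 2) (φ 1 * φ 3) (φ 0 * φ 3 + φ 1 * φ 2)
  obtain ⟨a, b, hab, rfl, rfl⟩ := exists_hopf_preimage hzt
  refine ⟨suTwo ![a, b], suTwo_mem_unitaryGroup ?_, ?_⟩
  · rw [dotProduct_star_self_fin_two]
    simpa [← normSq_eq_conj_mul_self] using congr(($hab : ℂ))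
  · rw [det_Tmat_czGate_mulVec_kron2_suTwo, hroot]
    push_cast [normSq_eq_conj_mul_self]
    ring

/-- every 2-qubit state can be prepared using local gates and at most one
controlled-Z gate: `(K₁ ⊗ K₂)·cz·(I ⊗ W₁)·φ = |00⟩`. -/
theorem stmt_8 (φ : Fin 4 → ℂ) (hunit : ∑ i, ‖φ i‖ ^ 2 = 1) :
    ∃ K₁ ∈ Matrix.unitaryGroup (Fin 2) ℂ, ∃ K₂ ∈ Matrix.unitaryGroup (Fin 2) ℂ,
      ∃ W₁ ∈ Matrix.unitaryGroup (Fin 2) ℂ,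
        (kron2 K₁ K₂ * czGate * kron2 1 W₁).mulVec φ = e00 := by
  obtain ⟨W, hW, hdet⟩ := exists_mem_unitaryGroup_det_Tmat_czGate_mulVec_eq_zero φ
  have hψ : star (czGate *ᵥ kron2 1 W *ᵥ φ) ⬝ᵥ (czGate *ᵥ kron2 1 W *ᵥ φ) = 1 := by
    rw [dotProduct_star_mulVec_self_of_mem_unitaryGroup czGate_mem_unitaryGroup,
      dotProduct_star_mulVec_self_of_mem_unitaryGroup (kron2_mem_unitaryGroup (one_mem _) hW),
      dotProduct_star_self_eq_sum_norm_sq, hunit, RCLike.ofReal_one]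
  obtain ⟨u, w, hu, hw, hψ_eq⟩ := exists_eq_tensor_of_det_Tmat_eq_zero hdet hψ
  refine ⟨suTwo u, suTwo_mem_unitaryGroup hu, suTwo w, suTwo_mem_unitaryGroup hw, W, hW, ?_⟩
  rw [← mulVec_mulVec, ← mulVec_mulVec, hψ_eq, kron2_mulVec_tensor, suTwo_mulVec_self hu,
    suTwo_mulVec_self hw, tensor_one_zero_eq_e00]
end
end

section
/- Let ψ ∈ ℂ^8 be written as ψ = |0⟩A + |1⟩B. Then there exists a 2×2 unitary matrix W such that (W ⊗ I ⊗ I)ψ, written as |0⟩A' + |1⟩B', satisfies det(A') = 0, where I is the 2×2 identity matrix. (If det(B) ≠ 0 one may take W = U(1,z₀) where z₀ is a root of the quadratic equation det(A + zB) = 0; if det(B) = 0 one may take W = [[0,1],[-1,0]].) -/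
open Matrix Complex
open scoped ComplexConjugate

noncomputable section

/-- The matrix `T₀` of a 3-qubit state vector `ψ = |0⟩T₀ + |1⟩T₁`. -/
def q3T0 (ψ : Fin 8 → ℂ) : Matrix (Fin 2) (Fin 2) ℂ := !![ψ 0, ψ 1; ψ 2, ψ 3]

/-- The matrix `T₁` of a 3-qubit state vector `ψ = |0⟩T₀ + |1⟩T₁`. -/
def q3T1 (ψ : Fin 8 → ℂ) : Matrix (Fin 2) (Fin 2) ℂ := !![ψ 4, ψ 5; ψ 6, ψ 7]

/-- bit of qubit 2 (leftmost) in the index `4a+2b+c`. -/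
def bit2 (i : Fin 8) : Fin 2 := ⟨i.val / 4, by have := i.isLt; omega⟩
/-- bit of qubit 1 (middle). -/
def bit1 (i : Fin 8) : Fin 2 := ⟨i.val / 2 % 2, by omega⟩
/-- bit of qubit 0 (rightmost). -/
def bit0 (i : Fin 8) : Fin 2 := ⟨i.val % 2, by omega⟩

/-- Kronecker product `U ⊗ V ⊗ W` acting on `ℂ^8`, with `|abc⟩` at index `4a+2b+c`. -/
def kron3 (U V W : Matrix (Fin 2) (Fin 2) ℂ) : Matrix (Fin 8) (Fin 8) ℂ :=
  fun i j => U (bit2 i) (bit2 j) * V (bit1 i) (bit1 j) * W (bit0 i) (bit0 j)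

/-!
The first row of `W ⊗ I ⊗ I` turns `ψ = |0⟩A + |1⟩B` into `A' = W₀₀ A + W₀₁ B`. For `W = U(1,z)`
this is a nonzero multiple of `A + zB`. When `B` is invertible, `A + zB = B (B⁻¹A + z)` is singular
for `z = -μ`, `μ` an eigenvalue of `B⁻¹A`, which exists over `ℂ`. When `det B = 0`, the unitary
`[[0,1],[-1,0]] = U(0,1)` gives `A' = B`.
-/

theorem Matrix.exists_det_add_smul_eq_zero {K n : Type*} [Field K] [IsAlgClosed K] [Fintype n]
    [DecidableEq n] [Nonempty n] (A B : Matrix n n K) (hB : B.det ≠ 0) :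
    ∃ z : K, (A + z • B).det = 0 := by
  have hdeg : 0 < (B⁻¹ * A).charpoly.degree := by
    rw [charpoly_degree_eq_dim]; exact_mod_cast Fintype.card_pos
  obtain ⟨μ, hμ⟩ := IsAlgClosed.exists_root _ hdeg.ne'
  have hfactor : A + (-μ) • B = -(B * (scalar n μ - B⁻¹ * A)) := by
    rw [Matrix.mul_sub, mul_nonsing_inv_cancel_left B A hB.isUnit, scalar_apply,
      ← smul_eq_mul_diagonal, neg_smul, neg_sub, sub_eq_add_neg]
  refine ⟨-μ, ?_⟩
  rw [hfactor, det_neg, det_mul, ← eval_charpoly, hμ, mul_zero, mul_zero]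

theorem q3T0_kron3_mulVec (W : Matrix (Fin 2) (Fin 2) ℂ) (ψ : Fin 8 → ℂ) :
    q3T0 (kron3 W 1 1 *ᵥ ψ) = W 0 0 • q3T0 ψ + W 0 1 • q3T1 ψ := by
  ext i j
  fin_cases i <;> fin_cases j <;>
    simp [q3T0, q3T1, kron3, mulVec, dotProduct, Fin.sum_univ_eight, bit0, bit1, bit2,
      one_apply, Fin.ext_iff]

theorem det_q3T0_kron3_mulVec_of_row {W : Matrix (Fin 2) (Fin 2) ℂ} {z : ℂ}
    (hW : W 0 1 = z * W 0 0) (ψ : Fin 8 → ℂ) :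
    (q3T0 (kron3 W 1 1 *ᵥ ψ)).det = W 0 0 ^ 2 * (q3T0 ψ + z • q3T1 ψ).det := by
  rw [q3T0_kron3_mulVec, hW, mul_comm, mul_smul, ← smul_add, det_smul, Fintype.card_fin]

theorem Umat_zero_one : Umat 0 1 = !![0, 1; -1, 0] := by
  simp [Umat]

theorem Umat_mem_unitaryGroup {x y : ℂ} (h : x ≠ 0 ∨ y ≠ 0) :
    Umat x y ∈ unitaryGroup (Fin 2) ℂ := by
  have hpos : 0 < normSq x + normSq y := by
    rcases h with h | h
    · exact add_pos_of_pos_of_nonneg (normSq_pos.2 h) (normSq_nonneg y)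
    · exact add_pos_of_nonneg_of_pos (normSq_nonneg x) (normSq_pos.2 h)
  have hss : ((Real.sqrt (normSq x + normSq y) : ℝ) : ℂ) ^ 2 = x * conj x + y * conj y := by
    rw [← ofReal_pow, Real.sq_sqrt hpos.le, mul_conj, mul_conj]; push_cast; ring
  have hne : ((Real.sqrt (normSq x + normSq y) : ℝ) : ℂ) ≠ 0 := by
    exact_mod_cast (Real.sqrt_pos.2 hpos).ne'
  rw [mem_unitaryGroup_iff]
  ext i j
  fin_cases i <;> fin_cases j <;>
    simp [Umat, mul_apply, Fin.sum_univ_two, one_apply, star_eq_conjTranspose] <;>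
    field_simp <;> rw [hss] <;> ring

/-- for any `ψ = |0⟩A + |1⟩B` there is a unitary `W` with
`det A' = 0` for `(W ⊗ I ⊗ I)ψ = |0⟩A' + |1⟩B'`; moreover if `det B ≠ 0` one may take
`W = U(1,z₀)` for any root `z₀` of `det(A + zB) = 0`, and if `det B = 0` one may take
`W = [[0,1],[-1,0]]`. -/
theorem stmt_10 (ψ : Fin 8 → ℂ) :
    (∃ W ∈ Matrix.unitaryGroup (Fin 2) ℂ,
        (q3T0 ((kron3 W 1 1).mulVec ψ)).det = 0) ∧
    ((q3T1 ψ).det ≠ 0 →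
      ∀ z₀ : ℂ, (q3T0 ψ + z₀ • q3T1 ψ).det = 0 →
        (q3T0 ((kron3 (Umat 1 z₀) 1 1).mulVec ψ)).det = 0) ∧
    ((q3T1 ψ).det = 0 →
      (q3T0 ((kron3 !![0, 1; -1, 0] 1 1).mulVec ψ)).det = 0) := by
  have hUmat : ∀ z₀ : ℂ, (q3T0 ψ + z₀ • q3T1 ψ).det = 0 →
      (q3T0 (kron3 (Umat 1 z₀) 1 1 *ᵥ ψ)).det = 0 := fun z₀ hz₀ => by
    rw [det_q3T0_kron3_mulVec_of_row (z := z₀) (by simp [Umat, mul_comm]), hz₀, mul_zero]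
  have hswap : (q3T1 ψ).det = 0 → (q3T0 (kron3 !![0, 1; -1, 0] 1 1 *ᵥ ψ)).det = 0 := fun hB => by
    simpa [q3T0_kron3_mulVec] using hB
  refine ⟨?_, fun _ => hUmat, hswap⟩
  by_cases hB : (q3T1 ψ).det = 0
  · exact ⟨_, Umat_zero_one ▸ Umat_mem_unitaryGroup (Or.inr one_ne_zero), hswap hB⟩
  · obtain ⟨z₀, hz₀⟩ := exists_det_add_smul_eq_zero (q3T0 ψ) (q3T1 ψ) hB
    exact ⟨_, Umat_mem_unitaryGroup (Or.inl one_ne_zero), hUmat z₀ hz₀⟩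
end
end

section
/- Let ψ ∈ ℂ^8 be a unit vector all of whose coordinates are real numbers. Then there exist 2×2 real orthogonal matrices W₀, W₂, W₃, W₄, W₅, W₆, W₇, W₈ such that (W₆ ⊗ W₇ ⊗ W₈)·cz₁₂·cz₀₂·(I ⊗ W₄ ⊗ W₅)·cz₀₁·(I ⊗ W₂ ⊗ W₃)·cz₀₁·(I ⊗ I ⊗ W₀)·ψ = |000⟩, where I is the 2×2 identity matrix. In other words, every real 3-qubit state can be prepared using real local gates and at most four controlled-Z gates. -/
/-!
For each value `a` of qubit 2 the real amplitudes form a 2×2 matrix `X`, i.e. the real-linear map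
`z ↦ P z + Q z̄` of `ℂ`. Rotations `rot α ⊗ rot β` on qubits 1 and 0 multiply `P` by `e^{i(α-β)}` and
`Q` by `e^{i(α+β)}`, `cz₀₁` exchanges the real parts of `P` and `Q`, and `cz₀₂ cz₁₂` conjugates
both in branch 1. Branch `a` is unentangled iff `det X = |P|² - |Q|²` vanishes, which after a
`cz₀₁` reads `Re (Q² - P²) = 0`. So `W₀` solves one such phase condition (branch 0), `W₂, W₃`
solve two (possible because branch 0 already has `|P| = |Q|`), and `W₄, W₅` make the phases of the
two branches conjugate, so that after `cz₀₂ cz₁₂` the state is a product `r ⊗ v ⊗ w`, which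
`W₆ ⊗ W₇ ⊗ W₈` rotates to `|000⟩`.
-/

open Matrix Complex
open scoped ComplexConjugate

noncomputable section

def cz01 : Matrix (Fin 8) (Fin 8) ℂ := diagonal ![1, 1, 1, -1, 1, 1, 1, -1]
def cz02 : Matrix (Fin 8) (Fin 8) ℂ := diagonal ![1, 1, 1, 1, 1, -1, 1, -1]
def cz12 : Matrix (Fin 8) (Fin 8) ℂ := diagonal ![1, 1, 1, 1, 1, 1, -1, -1]

/-- The basis state `|000⟩` in `ℂ^8`. -/
def e000 : Fin 8 → ℂ := ![1, 0, 0, 0, 0, 0, 0, 0]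

/-- Inclusion of a real 2×2 matrix into the complex 2×2 matrices. -/
def mc (W : Matrix (Fin 2) (Fin 2) ℝ) : Matrix (Fin 2) (Fin 2) ℂ :=
  W.map (fun r => (r : ℂ))

lemma re_exp_mul (θ : ℝ) (z : ℂ) :
    (exp (θ * I) * z).re = Real.cos θ * z.re - Real.sin θ * z.im := by
  simp [exp_ofReal_mul_I_re, exp_ofReal_mul_I_im]

lemma re_exp_neg_mul (θ : ℝ) (z : ℂ) :
    (exp ((-θ : ℝ) * I) * z).re = (exp (θ * I) * conj z).re := by
  rw [re_exp_mul, re_exp_mul, Real.cos_neg, Real.sin_neg, conj_re, conj_im]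
  ring

lemma exp_mul_I_mul_exp_mul_I (x y : ℝ) : exp (x * I) * exp (y * I) = exp ((x + y : ℝ) * I) := by
  rw [← exp_add]; push_cast; ring_nf

lemma conj_exp_mul_I (x : ℝ) : conj (exp (x * I)) = exp ((-x : ℝ) * I) := by
  rw [← exp_conj]; simp

lemma exp_mul_I_mul_sq (θ : ℝ) (z : ℂ) :
    (exp (θ * I) * z) ^ 2 = exp ((2 * θ : ℝ) * I) * z ^ 2 := by
  rw [mul_pow, ← exp_nat_mul]; push_cast; ring_nf

lemma exists_re_exp_mul_eq_zero (c : ℂ) : ∃ θ : ℝ, (exp (θ * I) * c).re = 0 := by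
  obtain ⟨r, t, rfl⟩ : ∃ r t : ℝ, c = r * exp (t * I) := ⟨_, _, (norm_mul_exp_arg_mul_I c).symm⟩
  refine ⟨Real.pi / 2 - t, ?_⟩
  simp only [re_exp_mul, re_ofReal_mul, im_ofReal_mul, exp_ofReal_mul_I_re, exp_ofReal_mul_I_im,
    Real.cos_pi_div_two_sub, Real.sin_pi_div_two_sub]
  ring

/- Since `‖A‖ = ‖B‖`, choosing `δ` so that `exp (δ * I) * B = conj (exp (σ * I) * A)` kills the
first real part for every `σ`; the second one is then a condition `Re (exp (σ * I) * c) = 0`. -/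
lemma exists_re_exp_mul_sub_exp_mul_eq_zero (A B C D : ℂ) (h : ‖A‖ = ‖B‖) :
    ∃ σ δ : ℝ, (exp (σ * I) * A - exp (δ * I) * B).re = 0 ∧
      (exp (σ * I) * C - exp (δ * I) * D).re = 0 := by
  obtain ⟨κ, hA⟩ : ∃ κ : ℝ, A = ‖A‖ * exp (κ * I) := ⟨_, (norm_mul_exp_arg_mul_I A).symm⟩
  obtain ⟨ν, hB⟩ : ∃ ν : ℝ, B = ‖A‖ * exp (ν * I) := ⟨_, h ▸ (norm_mul_exp_arg_mul_I B).symm⟩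
  obtain ⟨σ, hσ⟩ := exists_re_exp_mul_eq_zero (C - exp ((κ + ν : ℝ) * I) * conj D)
  refine ⟨σ, -(σ + (κ + ν)), ?_, ?_⟩
  · rw [hA, hB]
    simp only [sub_re, re_exp_mul, re_ofReal_mul, im_ofReal_mul, exp_ofReal_mul_I_re,
      exp_ofReal_mul_I_im, Real.cos_neg, Real.sin_neg, Real.cos_add, Real.sin_add]
    linear_combination -‖A‖ * (Real.cos σ * Real.cos κ - Real.sin σ * Real.sin κ) *
      Real.sin_sq_add_cos_sq ν
  · simp only [sub_re, sub_im, re_exp_mul, mul_im, exp_ofReal_mul_I_re, exp_ofReal_mul_I_im,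
      conj_re, conj_im, Real.cos_neg, Real.sin_neg, Real.cos_add, Real.sin_add] at hσ ⊢
    linear_combination hσ

lemma exists_cos_sin_eq {x y : ℝ} (h : x ^ 2 + y ^ 2 = 1) :
    ∃ θ : ℝ, Real.cos θ = x ∧ Real.sin θ = y := by
  have hw : ‖(⟨x, y⟩ : ℂ)‖ = 1 := by simp [norm_eq_sqrt_sq_add_sq, h]
  have hpolar := norm_mul_exp_arg_mul_I ⟨x, y⟩
  rw [hw, ofReal_one, one_mul] at hpolar
  exact ⟨_, by simpa using congrArg re hpolar, by simpa using congrArg im hpolar⟩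

def rot (θ : ℝ) : Matrix (Fin 2) (Fin 2) ℝ :=
  !![Real.cos θ, -Real.sin θ; Real.sin θ, Real.cos θ]

lemma rot_zero : rot 0 = 1 := by
  ext i j; fin_cases i <;> fin_cases j <;> simp [rot]

lemma rot_mem_orthogonalGroup (θ : ℝ) : rot θ ∈ orthogonalGroup (Fin 2) ℝ := by
  rw [mem_orthogonalGroup_iff]
  ext i j
  fin_cases i <;> fin_cases j <;> simp [rot, mul_apply, Fin.sum_univ_two] <;> ring_nf <;> simp

def kron3R (U V W : Matrix (Fin 2) (Fin 2) ℝ) : Matrix (Fin 8) (Fin 8) ℝ :=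
  fun i j => U (bit2 i) (bit2 j) * V (bit1 i) (bit1 j) * W (bit0 i) (bit0 j)

def cz01R : Matrix (Fin 8) (Fin 8) ℝ := diagonal ![1, 1, 1, -1, 1, 1, 1, -1]
def cz02R : Matrix (Fin 8) (Fin 8) ℝ := diagonal ![1, 1, 1, 1, 1, -1, 1, -1]
def cz12R : Matrix (Fin 8) (Fin 8) ℝ := diagonal ![1, 1, 1, 1, 1, 1, -1, -1]
def e000R : Fin 8 → ℝ := ![1, 0, 0, 0, 0, 0, 0, 0]

lemma mc_one : mc 1 = 1 := by
  simp [mc]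

lemma kron3_mc (U V W : Matrix (Fin 2) (Fin 2) ℝ) :
    kron3 (mc U) (mc V) (mc W) = (kron3R U V W).map ofRealHom := by
  ext i j
  simp [kron3, kron3R, mc]

lemma cz01_eq_map : cz01 = cz01R.map ofRealHom := by
  rw [cz01R, diagonal_map (map_zero _), cz01]
  congr 1; ext i; fin_cases i <;> simp

lemma cz02_eq_map : cz02 = cz02R.map ofRealHom := by
  rw [cz02R, diagonal_map (map_zero _), cz02]
  congr 1; ext i; fin_cases i <;> simp

lemma cz12_eq_map : cz12 = cz12R.map ofRealHom := by
  rw [cz12R, diagonal_map (map_zero _), cz12]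
  congr 1; ext i; fin_cases i <;> simp

lemma e000_eq_ofReal : e000 = fun i => (e000R i : ℂ) := by
  ext i; fin_cases i <;> simp [e000, e000R]

lemma map_ofRealHom_mulVec {n : Type*} [Fintype n] (M : Matrix n n ℝ) (v : n → ℝ) :
    M.map ofRealHom *ᵥ (fun i => (v i : ℂ)) = fun i => ((M *ᵥ v) i : ℂ) :=
  funext fun i => (RingHom.map_mulVec ofRealHom M v i).symm

lemma sum_sq_diagonal_mulVec {n : Type*} [Fintype n] [DecidableEq n] (d v : n → ℝ)
    (hd : ∀ i, d i ^ 2 = 1) : ∑ i, (diagonal d *ᵥ v) i ^ 2 = ∑ i, v i ^ 2 := by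
  simp [mulVec_diagonal, mul_pow, hd]

lemma sum_sq_cz01R_mulVec (φ : Fin 8 → ℝ) : ∑ i, (cz01R *ᵥ φ) i ^ 2 = ∑ i, φ i ^ 2 :=
  sum_sq_diagonal_mulVec _ _ fun i => by fin_cases i <;> norm_num

lemma sum_sq_cz02R_mulVec (φ : Fin 8 → ℝ) : ∑ i, (cz02R *ᵥ φ) i ^ 2 = ∑ i, φ i ^ 2 :=
  sum_sq_diagonal_mulVec _ _ fun i => by fin_cases i <;> norm_num

lemma sum_sq_cz12R_mulVec (φ : Fin 8 → ℝ) : ∑ i, (cz12R *ᵥ φ) i ^ 2 = ∑ i, φ i ^ 2 :=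
  sum_sq_diagonal_mulVec _ _ fun i => by fin_cases i <;> norm_num

/- With qubit 2 fixed to `a`, the amplitudes form a real 2×2 matrix (rows: qubit 1, columns:
qubit 0), i.e. the real-linear map `z ↦ linPart φ a * z + antilinPart φ a * conj z` of `ℂ ≅ ℝ²`. -/
def linPart (φ : Fin 8 → ℝ) : Fin 2 → ℂ :=
  ![⟨(φ 0 + φ 3) / 2, (φ 2 - φ 1) / 2⟩, ⟨(φ 4 + φ 7) / 2, (φ 6 - φ 5) / 2⟩]

def antilinPart (φ : Fin 8 → ℝ) : Fin 2 → ℂ :=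
  ![⟨(φ 0 - φ 3) / 2, (φ 2 + φ 1) / 2⟩, ⟨(φ 4 - φ 7) / 2, (φ 6 + φ 5) / 2⟩]

lemma eq_of_linPart_eq {φ φ' : Fin 8 → ℝ} (hP : linPart φ = linPart φ')
    (hQ : antilinPart φ = antilinPart φ') : φ = φ' := by
  have hP0 := Complex.ext_iff.1 (congrFun hP 0)
  have hP1 := Complex.ext_iff.1 (congrFun hP 1)
  have hQ0 := Complex.ext_iff.1 (congrFun hQ 0)
  have hQ1 := Complex.ext_iff.1 (congrFun hQ 1)
  simp only [linPart, antilinPart, cons_val_zero, cons_val_one, cons_val_fin_one] at hP0 hP1 hQ0 hQ1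
  funext i
  fin_cases i <;> simp <;> linarith

lemma linPart_e000R : linPart e000R = ![1 / 2, 0] := by
  ext a : 1; fin_cases a <;> apply Complex.ext <;> simp [linPart, e000R]

lemma antilinPart_e000R : antilinPart e000R = ![1 / 2, 0] := by
  ext a : 1; fin_cases a <;> apply Complex.ext <;> simp [antilinPart, e000R]

lemma sum_sq_eq_linPart (φ : Fin 8 → ℝ) :
    ∑ i, φ i ^ 2 = 2 * ∑ a, (‖linPart φ a‖ ^ 2 + ‖antilinPart φ a‖ ^ 2) := by
  simp [Fin.sum_univ_eight, linPart, antilinPart, Complex.sq_norm, normSq_apply]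
  ring

lemma linPart_kron3R_rot (ζ α β : ℝ) (φ : Fin 8 → ℝ) (a : Fin 2) :
    linPart (kron3R (rot ζ) (rot α) (rot β) *ᵥ φ) a =
      exp ((α - β : ℝ) * I) * (rot ζ a 0 * linPart φ 0 + rot ζ a 1 * linPart φ 1) := by
  fin_cases a <;> apply Complex.ext <;>
    simp only [mul_re, mul_im, add_re, add_im, ofReal_re, ofReal_im, exp_ofReal_mul_I_re,
      exp_ofReal_mul_I_im, Real.cos_sub, Real.sin_sub] <;>
    simp [linPart, kron3R, rot, mulVec, dotProduct, Fin.sum_univ_eight, bit0, bit1, bit2] <;> ring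

lemma antilinPart_kron3R_rot (ζ α β : ℝ) (φ : Fin 8 → ℝ) (a : Fin 2) :
    antilinPart (kron3R (rot ζ) (rot α) (rot β) *ᵥ φ) a =
      exp ((α + β : ℝ) * I) * (rot ζ a 0 * antilinPart φ 0 + rot ζ a 1 * antilinPart φ 1) := by
  fin_cases a <;> apply Complex.ext <;>
    simp only [mul_re, mul_im, add_re, add_im, ofReal_re, ofReal_im, exp_ofReal_mul_I_re,
      exp_ofReal_mul_I_im, Real.cos_add, Real.sin_add] <;>
    simp [antilinPart, kron3R, rot, mulVec, dotProduct, Fin.sum_univ_eight, bit0, bit1, bit2] <;>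
    ring

lemma linPart_kron3R_rot_zero (α β : ℝ) (φ : Fin 8 → ℝ) (a : Fin 2) :
    linPart (kron3R (rot 0) (rot α) (rot β) *ᵥ φ) a = exp ((α - β : ℝ) * I) * linPart φ a := by
  rw [linPart_kron3R_rot]; fin_cases a <;> simp [rot]

lemma antilinPart_kron3R_rot_zero (α β : ℝ) (φ : Fin 8 → ℝ) (a : Fin 2) :
    antilinPart (kron3R (rot 0) (rot α) (rot β) *ᵥ φ) a =
      exp ((α + β : ℝ) * I) * antilinPart φ a := by
  rw [antilinPart_kron3R_rot]; fin_cases a <;> simp [rot]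

lemma linPart_cz01R (φ : Fin 8 → ℝ) (a : Fin 2) :
    linPart (cz01R *ᵥ φ) a = ⟨(antilinPart φ a).re, (linPart φ a).im⟩ := by
  fin_cases a <;> simp [linPart, antilinPart, cz01R, mulVec_diagonal, sub_eq_add_neg]

lemma antilinPart_cz01R (φ : Fin 8 → ℝ) (a : Fin 2) :
    antilinPart (cz01R *ᵥ φ) a = ⟨(linPart φ a).re, (antilinPart φ a).im⟩ := by
  fin_cases a <;> simp [linPart, antilinPart, cz01R, mulVec_diagonal, sub_eq_add_neg]

lemma linPart_cz12R_cz02R (φ : Fin 8 → ℝ) :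
    linPart (cz12R *ᵥ cz02R *ᵥ φ) = ![linPart φ 0, conj (linPart φ 1)] := by
  ext a : 1
  fin_cases a <;> apply Complex.ext <;> simp [linPart, cz12R, cz02R, mulVec_diagonal]
  ring

lemma antilinPart_cz12R_cz02R (φ : Fin 8 → ℝ) :
    antilinPart (cz12R *ᵥ cz02R *ᵥ φ) = ![antilinPart φ 0, conj (antilinPart φ 1)] := by
  ext a : 1
  fin_cases a <;> apply Complex.ext <;> simp [antilinPart, cz12R, cz02R, mulVec_diagonal]
  ring

lemma sum_sq_kron3R_rot_mulVec (ζ α β : ℝ) (φ : Fin 8 → ℝ) :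
    ∑ i, (kron3R (rot ζ) (rot α) (rot β) *ᵥ φ) i ^ 2 = ∑ i, φ i ^ 2 := by
  rw [sum_sq_eq_linPart, sum_sq_eq_linPart]
  simp only [linPart_kron3R_rot, antilinPart_kron3R_rot, norm_mul, norm_exp_ofReal_mul_I, one_mul,
    Fin.sum_univ_two, Complex.sq_norm, normSq_apply, add_re, add_im, re_ofReal_mul, im_ofReal_mul]
  set P₀ := linPart φ 0
  set P₁ := linPart φ 1
  set Q₀ := antilinPart φ 0
  set Q₁ := antilinPart φ 1
  simp only [rot, of_apply, cons_val', cons_val_zero, cons_val_one, cons_val_fin_one, empty_val']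
  linear_combination 2 * (P₀.re ^ 2 + P₀.im ^ 2 + P₁.re ^ 2 + P₁.im ^ 2 + Q₀.re ^ 2 + Q₀.im ^ 2 +
    Q₁.re ^ 2 + Q₁.im ^ 2) * Real.sin_sq_add_cos_sq ζ

-- The block of branch `a` has determinant `‖linPart φ a‖ ^ 2 - ‖antilinPart φ a‖ ^ 2`.
def IsBranchProduct (φ : Fin 8 → ℝ) (a : Fin 2) : Prop :=
  ‖linPart φ a‖ = ‖antilinPart φ a‖

/- `φ = 2 r ⊗ v ⊗ w` for the unit vectors `v`, `w` at angles `(ν + μ) / 2` and `(ν - μ) / 2`. -/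
def IsProductState (φ : Fin 8 → ℝ) : Prop :=
  ∃ (r : Fin 2 → ℝ) (μ ν : ℝ),
    ∀ a, linPart φ a = r a * exp (μ * I) ∧ antilinPart φ a = r a * exp (ν * I)

lemma isBranchProduct_cz01R_iff (φ : Fin 8 → ℝ) (a : Fin 2) :
    IsBranchProduct (cz01R *ᵥ φ) a ↔ (antilinPart φ a ^ 2 - linPart φ a ^ 2).re = 0 := by
  rw [IsBranchProduct, ← sq_eq_sq₀ (norm_nonneg _) (norm_nonneg _), ← sub_eq_zero, linPart_cz01R,
    antilinPart_cz01R, Complex.sq_norm, Complex.sq_norm]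
  simp only [normSq_mk, sub_re, sq, mul_re]
  ring_nf

lemma exists_isBranchProduct_zero (φ : Fin 8 → ℝ) :
    ∃ γ : ℝ, IsBranchProduct (cz01R *ᵥ kron3R (rot 0) (rot 0) (rot γ) *ᵥ φ) 0 := by
  obtain ⟨σ, hσ⟩ := exists_re_exp_mul_eq_zero (antilinPart φ 0 ^ 2 - conj (linPart φ 0) ^ 2)
  refine ⟨σ / 2, ?_⟩
  rw [isBranchProduct_cz01R_iff, linPart_kron3R_rot_zero, antilinPart_kron3R_rot_zero,
    exp_mul_I_mul_sq, exp_mul_I_mul_sq, show 2 * (0 + σ / 2) = σ by ring,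
    show 2 * (0 - σ / 2) = -σ by ring, sub_re, re_exp_neg_mul, ← sub_re, ← mul_sub, map_pow]
  exact hσ

lemma exists_isBranchProduct (φ : Fin 8 → ℝ) (h : IsBranchProduct φ 0) :
    ∃ α β : ℝ, ∀ a, IsBranchProduct (cz01R *ᵥ kron3R (rot 0) (rot α) (rot β) *ᵥ φ) a := by
  obtain ⟨σ, δ, h₀, h₁⟩ := exists_re_exp_mul_sub_exp_mul_eq_zero (antilinPart φ 0 ^ 2)
    (linPart φ 0 ^ 2) (antilinPart φ 1 ^ 2) (linPart φ 1 ^ 2) (by rw [norm_pow, norm_pow, h])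
  refine ⟨(σ + δ) / 4, (σ - δ) / 4, fun a => ?_⟩
  rw [isBranchProduct_cz01R_iff, linPart_kron3R_rot_zero, antilinPart_kron3R_rot_zero,
    exp_mul_I_mul_sq, exp_mul_I_mul_sq, show 2 * ((σ + δ) / 4 + (σ - δ) / 4) = σ by ring,
    show 2 * ((σ + δ) / 4 - (σ - δ) / 4) = δ by ring]
  fin_cases a
  exacts [h₀, h₁]

lemma exists_isProductState (φ : Fin 8 → ℝ) (h : ∀ a, IsBranchProduct φ a) :
    ∃ γ δ : ℝ, IsProductState (cz12R *ᵥ cz02R *ᵥ kron3R (rot 0) (rot γ) (rot δ) *ᵥ φ) := by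
  obtain ⟨r, p, q, hP, hQ⟩ : ∃ r p q : Fin 2 → ℝ, (∀ a, linPart φ a = r a * exp (p a * I)) ∧
      ∀ a, antilinPart φ a = r a * exp (q a * I) :=
    ⟨_, _, _, fun a => (norm_mul_exp_arg_mul_I _).symm,
      fun a => (h a).symm ▸ (norm_mul_exp_arg_mul_I _).symm⟩
  refine ⟨-(p 0 + p 1 + q 0 + q 1) / 4, (p 0 + p 1 - q 0 - q 1) / 4, r, (p 0 - p 1) / 2,
    (q 0 - q 1) / 2, Fin.forall_fin_two.2 ⟨?_, ?_⟩⟩ <;>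
  simp only [linPart_cz12R_cz02R, antilinPart_cz12R_cz02R, cons_val_zero, cons_val_one,
    cons_val_fin_one, linPart_kron3R_rot_zero, antilinPart_kron3R_rot_zero, hP, hQ, map_mul,
    conj_ofReal, conj_exp_mul_I] <;>
  constructor <;> rw [mul_left_comm, exp_mul_I_mul_exp_mul_I] <;> ring_nf

lemma exists_kron3R_mulVec_eq_e000R (φ : Fin 8 → ℝ) (hφ : ∑ i, φ i ^ 2 = 1)
    (hprod : IsProductState φ) : ∃ ζ ξ η : ℝ, kron3R (rot ζ) (rot ξ) (rot η) *ᵥ φ = e000R := by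
  obtain ⟨r, μ, ν, h⟩ := hprod
  have hr : (2 * r 0) ^ 2 + (2 * r 1) ^ 2 = 1 := by
    simp only [sum_sq_eq_linPart, Fin.sum_univ_two, (h _).1, (h _).2, norm_mul,
      norm_exp_ofReal_mul_I, norm_real, Real.norm_eq_abs, mul_one, sq_abs] at hφ
    linear_combination hφ
  have hrC : (2 * r 0 : ℂ) ^ 2 + (2 * r 1 : ℂ) ^ 2 = 1 := by exact_mod_cast hr
  obtain ⟨θ, hc, hs⟩ := exists_cos_sin_eq hr
  have hμ : exp ((-(μ + ν) / 2 - (μ - ν) / 2 : ℝ) * I) * exp (μ * I) = 1 := by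
    rw [exp_mul_I_mul_exp_mul_I]; ring_nf; simp
  have hν : exp ((-(μ + ν) / 2 + (μ - ν) / 2 : ℝ) * I) * exp (ν * I) = 1 := by
    rw [exp_mul_I_mul_exp_mul_I]; ring_nf; simp
  refine ⟨-θ, -(μ + ν) / 2, (μ - ν) / 2, eq_of_linPart_eq ?_ ?_⟩
  · refine funext (Fin.forall_fin_two.2 ⟨?_, ?_⟩) <;>
    rw [linPart_kron3R_rot, (h 0).1, (h 1).1, linPart_e000R] <;>
    simp only [rot, of_apply, cons_val', cons_val_zero, cons_val_one, cons_val_fin_one, empty_val',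
      Real.cos_neg, Real.sin_neg, neg_neg, hc, hs]
    · push_cast at hμ ⊢
      linear_combination (2 * r 0 * r 0 + 2 * r 1 * r 1 : ℂ) * hμ + hrC / 2
    · push_cast; ring
  · refine funext (Fin.forall_fin_two.2 ⟨?_, ?_⟩) <;>
    rw [antilinPart_kron3R_rot, (h 0).2, (h 1).2, antilinPart_e000R] <;>
    simp only [rot, of_apply, cons_val', cons_val_zero, cons_val_one, cons_val_fin_one, empty_val',
      Real.cos_neg, Real.sin_neg, neg_neg, hc, hs]
    · push_cast at hν ⊢
      linear_combination (2 * r 0 * r 0 + 2 * r 1 * r 1 : ℂ) * hν + hrC / 2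
    · push_cast; ring

theorem exists_rot_circuit_mulVec_eq_e000R (φ : Fin 8 → ℝ) (hφ : ∑ i, φ i ^ 2 = 1) :
    ∃ γ α β γ' δ' ζ ξ η : ℝ,
      kron3R (rot ζ) (rot ξ) (rot η) *ᵥ cz12R *ᵥ cz02R *ᵥ kron3R (rot 0) (rot γ') (rot δ') *ᵥ
        cz01R *ᵥ kron3R (rot 0) (rot α) (rot β) *ᵥ cz01R *ᵥ kron3R (rot 0) (rot 0) (rot γ) *ᵥ φ =
        e000R := by
  obtain ⟨γ, h₁⟩ := exists_isBranchProduct_zero φ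
  obtain ⟨α, β, h₂⟩ := exists_isBranchProduct _ h₁
  obtain ⟨γ', δ', h₃⟩ := exists_isProductState _ h₂
  obtain ⟨ζ, ξ, η, h₄⟩ := exists_kron3R_mulVec_eq_e000R _ (by
    simp only [sum_sq_cz01R_mulVec, sum_sq_cz02R_mulVec, sum_sq_cz12R_mulVec,
      sum_sq_kron3R_rot_mulVec, hφ]) h₃
  exact ⟨γ, α, β, γ', δ', ζ, ξ, η, h₄⟩

/-- every real 3-qubit state can be prepared using real local gates and at
most four controlled-Z gates:
`(W₆⊗W₇⊗W₈)·cz₁₂·cz₀₂·(I⊗W₄⊗W₅)·cz₀₁·(I⊗W₂⊗W₃)·cz₀₁·(I⊗I⊗W₀)·ψ = |000⟩`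
with all `Wᵢ` real orthogonal. -/
theorem stmt_12 (ψ : Fin 8 → ℂ) (hunit : ∑ i, ‖ψ i‖ ^ 2 = 1)
    (hreal : ∀ i, (ψ i).im = 0) :
    ∃ W₀ ∈ Matrix.orthogonalGroup (Fin 2) ℝ, ∃ W₂ ∈ Matrix.orthogonalGroup (Fin 2) ℝ,
    ∃ W₃ ∈ Matrix.orthogonalGroup (Fin 2) ℝ, ∃ W₄ ∈ Matrix.orthogonalGroup (Fin 2) ℝ,
    ∃ W₅ ∈ Matrix.orthogonalGroup (Fin 2) ℝ, ∃ W₆ ∈ Matrix.orthogonalGroup (Fin 2) ℝ,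
    ∃ W₇ ∈ Matrix.orthogonalGroup (Fin 2) ℝ, ∃ W₈ ∈ Matrix.orthogonalGroup (Fin 2) ℝ,
      (kron3 (mc W₆) (mc W₇) (mc W₈) * cz12 * cz02 * kron3 1 (mc W₄) (mc W₅) * cz01 *
        kron3 1 (mc W₂) (mc W₃) * cz01 * kron3 1 1 (mc W₀)).mulVec ψ = e000 := by
  have hψ : ψ = fun i => ((ψ i).re : ℂ) := funext fun i => Complex.ext rfl (by simp [hreal i])
  rw [hψ] at hunit ⊢
  obtain ⟨γ, α, β, γ', δ', ζ, ξ, η, h⟩ :=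
    exists_rot_circuit_mulVec_eq_e000R _ (by simpa [norm_real, sq_abs] using hunit)
  refine ⟨rot γ, rot_mem_orthogonalGroup γ, rot α, rot_mem_orthogonalGroup α,
    rot β, rot_mem_orthogonalGroup β, rot γ', rot_mem_orthogonalGroup γ',
    rot δ', rot_mem_orthogonalGroup δ', rot ζ, rot_mem_orthogonalGroup ζ,
    rot ξ, rot_mem_orthogonalGroup ξ, rot η, rot_mem_orthogonalGroup η, ?_⟩
  rw [← mc_one, ← rot_zero]
  simp only [kron3_mc, cz01_eq_map, cz02_eq_map, cz12_eq_map, ← Matrix.map_mul,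
    map_ofRealHom_mulVec, e000_eq_ofReal, ← h, mulVec_mulVec, Matrix.mul_assoc]
end
end

section
/- Let ψ ∈ ℂ^8 be a unit vector with real coordinates w₀,...,w₇ such that Δ(ψ) = (w₀w₇ - w₁w₆ - w₂w₅ + w₃w₄)² - 4(w₁w₂ - w₀w₃)(w₅w₆ - w₄w₇) < 0. Then there exists a 2×2 real orthogonal matrix U such that the vector cz₀₁·(I ⊗ I ⊗ U)·ψ, written as |0⟩A₁ + |1⟩B₁, satisfies det(A₁) = 0, where I is the 2×2 identity matrix. -/
open Matrix Complex
open scoped ComplexConjugate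

noncomputable section

/-! Applying `U` to qubit 0 turns `T₀` into `T₀ Uᵀ`, and `cz₀₁` then negates its `(1,1)` entry, so
`det A₁ = -(m₀₀ m₁₁ + m₀₁ m₁₀)` where `m = T₀ Uᵀ`. For the rotation `U` by `θ` this is
`-(B cos 2θ - A sin 2θ)` with `A = w₁w₃ - w₀w₂`, `B = w₀w₃ + w₁w₂`; since `A` and `B` are real,
the angle `2θ = arg (A + B i)` makes it vanish. -/

lemma q3T0_kron3_one_mulVec (V W : Matrix (Fin 2) (Fin 2) ℂ) (ψ : Fin 8 → ℂ) :
    q3T0 (kron3 1 V W *ᵥ ψ) = V * q3T0 ψ * Wᵀ := by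
  ext i j
  fin_cases i <;> fin_cases j <;>
    simp [q3T0, kron3, bit0, bit1, bit2, mulVec, dotProduct, Fin.sum_univ_eight, mul_apply,
      Fin.sum_univ_two, one_apply] <;> ring

lemma det_q3T0_cz01_mulVec (φ : Fin 8 → ℂ) :
    (q3T0 (cz01 *ᵥ φ)).det = -(q3T0 φ 0 0 * q3T0 φ 1 1 + q3T0 φ 0 1 * q3T0 φ 1 0) := by
  simp [q3T0, cz01, det_fin_two_of, mulVec_diagonal]
  ring

def rotationMatrix (θ : ℝ) : Matrix (Fin 2) (Fin 2) ℝ :=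
  !![Real.cos θ, -Real.sin θ; Real.sin θ, Real.cos θ]

lemma rotationMatrix_mem_orthogonalGroup (θ : ℝ) :
    rotationMatrix θ ∈ orthogonalGroup (Fin 2) ℝ := by
  rw [mem_orthogonalGroup_iff]
  ext i j
  fin_cases i <;> fin_cases j <;>
    simp [rotationMatrix, mul_apply, Fin.sum_univ_two, one_apply, ← sq, mul_comm]

lemma exists_mul_sin_eq_mul_cos (a b : ℝ) : ∃ θ, a * Real.sin θ = b * Real.cos θ := by
  set z : ℂ := ⟨a, b⟩
  refine ⟨z.arg, ?_⟩
  rcases eq_or_ne z 0 with hz | hz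
  · have ha : a = 0 := congrArg Complex.re hz
    have hb : b = 0 := congrArg Complex.im hz
    simp [ha, hb]
  · have hnorm : ‖z‖ ≠ 0 := norm_ne_zero_iff.mpr hz
    apply mul_left_cancel₀ hnorm
    calc ‖z‖ * (a * Real.sin z.arg) = a * (‖z‖ * Real.sin z.arg) := by ring
      _ = a * b := by rw [Complex.norm_mul_sin_arg]
      _ = b * (‖z‖ * Real.cos z.arg) := by rw [Complex.norm_mul_cos_arg]; ring
      _ = ‖z‖ * (b * Real.cos z.arg) := by ring

lemma rotated_cross_sum_eq_cos_two_mul_sub_sin_two_mul (w₀ w₁ w₂ w₃ θ : ℝ) :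
    (w₀ * Real.cos θ - w₁ * Real.sin θ) * (w₂ * Real.sin θ + w₃ * Real.cos θ) +
      (w₀ * Real.sin θ + w₁ * Real.cos θ) * (w₂ * Real.cos θ - w₃ * Real.sin θ) =
    (w₀ * w₃ + w₁ * w₂) * Real.cos (2 * θ) - (w₁ * w₃ - w₀ * w₂) * Real.sin (2 * θ) := by
  rw [Real.cos_two_mul, Real.sin_two_mul]
  linear_combination (-(w₀ * w₃ + w₁ * w₂)) * Real.sin_sq_add_cos_sq θ

lemma det_q3T0_cz01_kron3_rotationMatrix (w : Fin 8 → ℝ) (θ : ℝ) :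
    (q3T0 ((cz01 * kron3 1 1 (mc (rotationMatrix θ))) *ᵥ fun i => (w i : ℂ))).det =
      -(((w 0 * w 3 + w 1 * w 2) * Real.cos (2 * θ) -
        (w 1 * w 3 - w 0 * w 2) * Real.sin (2 * θ) : ℝ) : ℂ) := by
  rw [← mulVec_mulVec, det_q3T0_cz01_mulVec, q3T0_kron3_one_mulVec,
    ← rotated_cross_sum_eq_cos_two_mul_sub_sin_two_mul]
  simp [q3T0, mc, rotationMatrix, mul_apply, Fin.sum_univ_two]
  ring

theorem stmt_14_general (ψ : Fin 8 → ℂ) (w : Fin 8 → ℝ) (hw : ∀ i, ψ i = (w i : ℂ)) :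
    ∃ U ∈ Matrix.orthogonalGroup (Fin 2) ℝ,
      (q3T0 ((cz01 * kron3 1 1 (mc U)).mulVec ψ)).det = 0 := by
  obtain ⟨θ, hθ⟩ := exists_mul_sin_eq_mul_cos (w 1 * w 3 - w 0 * w 2) (w 0 * w 3 + w 1 * w 2)
  refine ⟨rotationMatrix (θ / 2), rotationMatrix_mem_orthogonalGroup _, ?_⟩
  rw [funext hw, det_q3T0_cz01_kron3_rotationMatrix, mul_div_cancel₀ θ two_ne_zero, hθ, sub_self,
    ofReal_zero, neg_zero]

/-- for a real unit state `ψ` with `Δ(ψ) < 0` there is a real orthogonal `U`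
such that `cz₀₁·(I ⊗ I ⊗ U)·ψ = |0⟩A₁ + |1⟩B₁` has `det A₁ = 0`. -/
theorem stmt_14 (ψ : Fin 8 → ℂ) (w : Fin 8 → ℝ) (hw : ∀ i, ψ i = (w i : ℂ))
    (hunit : ∑ i, ‖ψ i‖ ^ 2 = 1)
    (hΔ : (w 0 * w 7 - w 1 * w 6 - w 2 * w 5 + w 3 * w 4) ^ 2 -
        4 * (w 1 * w 2 - w 0 * w 3) * (w 5 * w 6 - w 4 * w 7) < 0) :
    ∃ U ∈ Matrix.orthogonalGroup (Fin 2) ℝ,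
      (q3T0 ((cz01 * kron3 1 1 (mc U)).mulVec ψ)).det = 0 :=
  stmt_14_general ψ w hw
end
end

section
/- Let ψ ∈ ℂ^8 have real coordinates w₀,...,w₇, written as ψ = |0⟩A + |1⟩B where A = [[w₀,w₁],[w₂,w₃]] and B = [[w₄,w₅],[w₆,w₇]]. Then Δ(ψ) = (w₀w₇ - w₁w₆ - w₂w₅ + w₃w₄)² - 4(w₁w₂ - w₀w₃)(w₅w₆ - w₄w₇) ≥ 0 if and only if det(A) = 0, or det(B) = 0, or there exists a real number z with det(A + zB) = 0. -/
open Matrix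

/-! `Δ(ψ)` is the discriminant of the quadratic `z ↦ det (A + z • B)`, whose leading coefficient
is `det B` and constant term `det A`. When `det B ≠ 0` a real root exists iff the discriminant is
nonnegative; when `det B = 0` the discriminant is a square; and `det A = 0` is the root `z = 0`. -/

theorem discrim_nonneg_iff (a b c : ℝ) :
    0 ≤ discrim a b c ↔ a = 0 ∨ ∃ x, a * (x * x) + b * x + c = 0 := by
  constructor
  · intro hd
    by_cases ha : a = 0
    · exact Or.inl ha
    · exact Or.inr (exists_quadratic_eq_zero ha ⟨√(discrim a b c), (Real.mul_self_sqrt hd).symm⟩)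
  · rintro (rfl | ⟨x, hx⟩)
    · simpa [discrim] using sq_nonneg b
    · exact discrim_eq_sq_of_quadratic_eq_zero hx ▸ sq_nonneg _

theorem Matrix.det_fin_two_add_smul {R : Type*} [CommRing R] (A B : Matrix (Fin 2) (Fin 2) R)
    (z : R) : (A + z • B).det = B.det * (z * z) + (adjugate A * B).trace * z + A.det := by
  simp only [det_fin_two, adjugate_fin_two, trace_fin_two, add_apply, smul_apply, mul_apply,
    Fin.sum_univ_two, of_apply, cons_val', cons_val_zero, cons_val_one, empty_val',
    cons_val_fin_one, smul_eq_mul]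
  ring

/-- for a real state with amplitudes `w₀,…,w₇`, written as `|0⟩A + |1⟩B`,
`Δ(ψ) ≥ 0` iff `det A = 0`, or `det B = 0`, or `det(A + zB) = 0` for some real `z`. -/
theorem stmt_15 (w : Fin 8 → ℝ) :
    (w 0 * w 7 - w 1 * w 6 - w 2 * w 5 + w 3 * w 4) ^ 2 -
        4 * (w 1 * w 2 - w 0 * w 3) * (w 5 * w 6 - w 4 * w 7) ≥ 0 ↔
      ((!![w 0, w 1; w 2, w 3] : Matrix (Fin 2) (Fin 2) ℝ).det = 0 ∨
       (!![w 4, w 5; w 6, w 7] : Matrix (Fin 2) (Fin 2) ℝ).det = 0 ∨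
       ∃ z : ℝ, (!![w 0, w 1; w 2, w 3] + z • !![w 4, w 5; w 6, w 7]).det = 0) := by
  set A : Matrix (Fin 2) (Fin 2) ℝ := !![w 0, w 1; w 2, w 3]
  set B : Matrix (Fin 2) (Fin 2) ℝ := !![w 4, w 5; w 6, w 7]
  have hΔ : (w 0 * w 7 - w 1 * w 6 - w 2 * w 5 + w 3 * w 4) ^ 2 -
      4 * (w 1 * w 2 - w 0 * w 3) * (w 5 * w 6 - w 4 * w 7) =
      discrim B.det (adjugate A * B).trace A.det := by
    simp only [A, B, discrim, det_fin_two_of, adjugate_fin_two_of, trace_fin_two, mul_apply,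
      Fin.sum_univ_two, of_apply, cons_val', cons_val_zero, cons_val_one, empty_val',
      cons_val_fin_one]
    ring
  have hroot_of_detA : A.det = 0 → ∃ z : ℝ, (A + z • B).det = 0 := fun h => ⟨0, by simpa⟩
  simp only [hΔ, ge_iff_le, discrim_nonneg_iff, det_fin_two_add_smul] at hroot_of_detA ⊢
  tauto
end

section
/- Let A = [[a,b],[c,d]] be a 2×2 real matrix with det(A) ≠ 0. Then there exist k ∈ ℝ and a 2×2 real orthogonal matrix R of the form (1/√(x²+y²))·[[x,y],[-y,x]] with (x,y) ≠ (0,0) such that the product W = A·R, with entries w₁₁,w₁₂,w₂₁,w₂₂, satisfies w₂₁ = k·w₁₁ and w₂₂ = -k·w₁₂. -/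
open Matrix

noncomputable section

/-- The real rotation matrix `(1/√(x²+y²))·[[x,y],[-y,x]]`. -/
def Rrot (x y : ℝ) : Matrix (Fin 2) (Fin 2) ℝ :=
  (Real.sqrt (x ^ 2 + y ^ 2))⁻¹ • !![x, y; -y, x]

/-- for a nonsingular real `A = [[a,b],[c,d]]` there are `k ∈ ℝ` and a rotation
`R = (1/√(x²+y²))·[[x,y],[-y,x]]`, `(x,y) ≠ (0,0)`, such that `W = A·R` satisfies
`w₂₁ = k·w₁₁` and `w₂₂ = -k·w₁₂`. -/
theorem stmt_16 (a b c d : ℝ) (hA : (!![a, b; c, d]).det ≠ 0) :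
    ∃ k x y : ℝ, (x, y) ≠ (0, 0) ∧
      (!![a, b; c, d] * Rrot x y) 1 0 = k * (!![a, b; c, d] * Rrot x y) 0 0 ∧
      (!![a, b; c, d] * Rrot x y) 1 1 = -k * (!![a, b; c, d] * Rrot x y) 0 1 := by
  have hdet : a * d - b * c ≠ 0 := by
    simpa [Matrix.det_fin_two_of] using hA
  have hab : a ^ 2 + b ^ 2 ≠ 0 := by
    intro h
    have ha : a = 0 := by nlinarith [sq_nonneg a, sq_nonneg b]
    have hb : b = 0 := by nlinarith [sq_nonneg a, sq_nonneg b]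
    apply hdet; rw [ha, hb]; ring
  set k := Real.sqrt ((c ^ 2 + d ^ 2) / (a ^ 2 + b ^ 2)) with hk
  have hk2 : k ^ 2 * (a ^ 2 + b ^ 2) = c ^ 2 + d ^ 2 := by
    rw [hk, Real.sq_sqrt (by positivity)]
    field_simp
  refine ⟨k, d - k * b, c - k * a, ?_, ?_, ?_⟩
  · intro h
    have hx : d - k * b = 0 := by simpa using congrArg Prod.fst h
    have hy : c - k * a = 0 := by simpa using congrArg Prod.snd h
    apply hdet
    have hd : d = k * b := by linarith
    have hc : c = k * a := by linarith
    rw [hd, hc]; ring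
  · simp [Rrot, Matrix.mul_apply, Fin.sum_univ_two]
    ring
  · simp [Rrot, Matrix.mul_apply, Fin.sum_univ_two]
    set s := (Real.sqrt ((d - k * b) ^ 2 + (c - k * a) ^ 2))⁻¹
    linear_combination (-s) * hk2
end
end

section
/- Let ψ ∈ ℂ^8 be written as ψ = |0⟩A + |1⟩B, where the second row and the second column of A are zero (i.e., A = [[α,0],[0,0]] for some α ∈ ℂ) and det(B) ≠ 0. Then there exists a 2×2 unitary matrix U such that the vector ψ' = (I ⊗ I ⊗ U⁻¹)·cz₀₁·(I ⊗ I ⊗ U)·ψ, written as |0⟩A' + |1⟩B', satisfies: the second row and the second column of A' are zero, and det(B') = 0; here I is the 2×2 identity matrix. -/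
open Matrix Complex
open scoped ComplexConjugate

noncomputable section

section helpers

lemma exists_sw (a b c : ℂ) : ∃ (s : ℝ) (w : ℂ),
    (s:ℂ) * (s:ℂ) + w * conj w = 1 ∧ (s:ℂ) * a + w * c - conj w * b = 0 := by
  let L : (ℝ × ℂ) →ₗ[ℝ] ℂ :=
    { toFun := fun p => (p.1 : ℂ) * a + p.2 * c - conj p.2 * b
      map_add' := by intro p q; simp [map_add]; push_cast; ring
      map_smul' := by
        intro r p
        simp [Complex.real_smul, _root_.map_mul, Complex.conj_ofReal]
        ring }
  have hlt : Module.finrank ℝ ℂ < Module.finrank ℝ (ℝ × ℂ) := by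
    simp [Module.finrank_prod, Complex.finrank_real_complex]
  have hker := LinearMap.ker_ne_bot_of_finrank_lt (f := L) hlt
  rw [Submodule.ne_bot_iff] at hker
  obtain ⟨⟨s, w⟩, hmem, hne⟩ := hker
  have hcond : (s:ℂ) * a + w * c - conj w * b = 0 := hmem
  have hn : (0:ℝ) < s^2 + Complex.normSq w := by
    rcases eq_or_ne s 0 with hs | hs
    · have hw : w ≠ 0 := by
        intro hw; exact hne (by simp [Prod.ext_iff, hs, hw])
      have := Complex.normSq_pos.mpr hw
      nlinarith
    · nlinarith [Complex.normSq_nonneg w, sq_pos_of_ne_zero hs]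
  set n : ℝ := Real.sqrt (s^2 + Complex.normSq w) with hn'
  have hnpos : 0 < n := Real.sqrt_pos.mpr hn
  have hnsq : n^2 = s^2 + Complex.normSq w := Real.sq_sqrt hn.le
  have hn0 : (n:ℂ) ≠ 0 := by exact_mod_cast hnpos.ne'
  have hR : s*s + Complex.normSq w = n*n := by nlinarith
  have hC : (s:ℂ)*s + w * conj w = (n:ℂ)*n := by
    rw [Complex.mul_conj]; exact_mod_cast hR
  refine ⟨s / n, w / n, ?_, ?_⟩
  · rw [map_div₀, Complex.conj_ofReal]
    push_cast
    field_simp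
    linear_combination hC
  · rw [map_div₀, Complex.conj_ofReal]
    push_cast
    linear_combination (1/(n:ℂ)) * hcond

lemma exists_uv (a b c : ℂ) : ∃ (u : ℝ) (v : ℂ),
    (u:ℂ) * u + v * conj v = 1 ∧
    ((u:ℂ) * u - v * conj v) * a + 2 * u * v * c - 2 * u * conj v * b = 0 := by
  obtain ⟨s, w, hnorm, hcond⟩ := exists_sw a b c
  have hs1 : -1 ≤ s ∧ s ≤ 1 := by
    have h : ((s^2 + Complex.normSq w : ℝ) : ℂ) = 1 := by
      push_cast; rw [← Complex.mul_conj]; linear_combination hnorm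
    have h2 : s^2 + Complex.normSq w = 1 := by exact_mod_cast h
    constructor <;> nlinarith [Complex.normSq_nonneg w]
  have h1s : (0:ℝ) ≤ (1+s)/2 := by linarith [hs1.1]
  set u : ℝ := Real.sqrt ((1+s)/2) with hu'
  have hu2 : u^2 = (1+s)/2 := Real.sq_sqrt h1s
  have hu2C : (u:ℂ) * u = (1 + (s:ℂ))/2 := by
    rw [show ((u:ℂ)*u) = ((u^2 : ℝ) : ℂ) by push_cast; ring, hu2]; push_cast; ring
  have hww : w * conj w = 1 - (s:ℂ)*(s:ℂ) := by linear_combination hnorm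
  rcases eq_or_ne (1 + s) 0 with h0 | h0
  · -- s = -1, w = 0, u = 0, v = 1
    have hsC : (s:ℂ) = -1 := by
      have : s = -1 := by linarith
      rw [this]; push_cast; ring
    have hu0 : (u:ℂ) = 0 := by
      have : u = 0 := by rw [hu', show (1+s)/2 = 0 by linarith, Real.sqrt_zero]
      exact_mod_cast this
    have ha : a = 0 := by
      have hw0 : w = 0 := by
        have hww0 : w * conj w = 0 := by rw [hsC] at hww; linear_combination hww
        have h2 := Complex.mul_conj w
        rw [hww0] at h2
        have : Complex.normSq w = 0 := by exact_mod_cast h2.symm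
        exact Complex.normSq_eq_zero.mp this
      rw [hw0, hsC] at hcond
      simpa using hcond
    refine ⟨u, 1, by simp [hu0], by simp [hu0, ha]⟩
  · have h1s' : (0:ℝ) < 1 + s := lt_of_le_of_ne (by linarith [hs1.1]) (Ne.symm h0)
    have hupos : 0 < u := Real.sqrt_pos.mpr (by linarith)
    have hu0 : (u:ℂ) ≠ 0 := by exact_mod_cast hupos.ne'
    have h0C : (1 + (s:ℂ)) ≠ 0 := by exact_mod_cast h0
    have hcv : conj (w / (2*(u:ℂ))) = conj w / (2*u) := by
      simp [map_div₀, Complex.conj_ofReal, map_ofNat]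
    have hvv : (w/(2*(u:ℂ))) * (conj w/(2*u)) = (1 - (s:ℂ))/2 := by
      rw [div_mul_div_comm, show (2*(u:ℂ))*(2*u) = 2*(1+(s:ℂ)) by linear_combination 4*hu2C,
        hww, div_eq_div_iff (by exact mul_ne_zero two_ne_zero h0C) two_ne_zero]
      ring
    have hw : 2*(u:ℂ)*(w/(2*u)) = w := by field_simp
    have hcw : 2*(u:ℂ)*(conj w/(2*u)) = conj w := by field_simp
    refine ⟨u, w / (2*u), ?_, ?_⟩
    · rw [hcv]; linear_combination hu2C + hvv
    · rw [hcv]; linear_combination hcond + a * hu2C - a * hvv + c * hw - b * hcw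

lemma bit0_0 : bit0 0 = 0 := rfl
lemma bit1_0 : bit1 0 = 0 := rfl
lemma bit2_0 : bit2 0 = 0 := rfl
lemma bit0_1 : bit0 1 = 1 := rfl
lemma bit1_1 : bit1 1 = 0 := rfl
lemma bit2_1 : bit2 1 = 0 := rfl
lemma bit0_2 : bit0 2 = 0 := rfl
lemma bit1_2 : bit1 2 = 1 := rfl
lemma bit2_2 : bit2 2 = 0 := rfl
lemma bit0_3 : bit0 3 = 1 := rfl
lemma bit1_3 : bit1 3 = 1 := rfl
lemma bit2_3 : bit2 3 = 0 := rfl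
lemma bit0_4 : bit0 4 = 0 := rfl
lemma bit1_4 : bit1 4 = 0 := rfl
lemma bit2_4 : bit2 4 = 1 := rfl
lemma bit0_5 : bit0 5 = 1 := rfl
lemma bit1_5 : bit1 5 = 0 := rfl
lemma bit2_5 : bit2 5 = 1 := rfl
lemma bit0_6 : bit0 6 = 0 := rfl
lemma bit1_6 : bit1 6 = 1 := rfl
lemma bit2_6 : bit2 6 = 1 := rfl
lemma bit0_7 : bit0 7 = 1 := rfl
lemma bit1_7 : bit1 7 = 1 := rfl
lemma bit2_7 : bit2 7 = 1 := rfl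

end helpers

/-- if `ψ = |0⟩A + |1⟩B` with `A = [[α,0],[0,0]]` and `det B ≠ 0`, there is a
unitary `U` such that `ψ' = (I ⊗ I ⊗ U⁻¹)·cz₀₁·(I ⊗ I ⊗ U)·ψ = |0⟩A' + |1⟩B'` has the
second row and second column of `A'` zero and `det B' = 0`. -/
theorem stmt_19 (ψ : Fin 8 → ℂ) (α : ℂ) (hA : q3T0 ψ = !![α, 0; 0, 0])
    (hB : (q3T1 ψ).det ≠ 0) :
    ∃ U ∈ Matrix.unitaryGroup (Fin 2) ℂ,
      q3T0 ((kron3 1 1 U⁻¹ * cz01 * kron3 1 1 U).mulVec ψ) 0 1 = 0 ∧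
      q3T0 ((kron3 1 1 U⁻¹ * cz01 * kron3 1 1 U).mulVec ψ) 1 0 = 0 ∧
      q3T0 ((kron3 1 1 U⁻¹ * cz01 * kron3 1 1 U).mulVec ψ) 1 1 = 0 ∧
      (q3T1 ((kron3 1 1 U⁻¹ * cz01 * kron3 1 1 U).mulVec ψ)).det = 0 := by
  obtain ⟨u, v, hU1, hC⟩ :=
    exists_uv (ψ 6 * ψ 5 + ψ 7 * ψ 4) (ψ 7 * ψ 5) (ψ 6 * ψ 4)
  set U : Matrix (Fin 2) (Fin 2) ℂ := !![(u:ℂ), -conj v; v, (u:ℂ)] with hUdef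
  have hstar : star U = !![(u:ℂ), conj v; -v, (u:ℂ)] := by
    ext i j
    fin_cases i <;> fin_cases j <;>
      simp [hUdef, Matrix.star_apply, Complex.conj_ofReal]
  have hUnit : star U * U = 1 := by
    rw [hstar]
    ext i j
    fin_cases i <;> fin_cases j <;>
      simp [hUdef, Matrix.mul_apply, Fin.sum_univ_two, Matrix.one_apply] <;>
      first
        | linear_combination hU1
        | linear_combination -hU1
        | linear_combination 2*hU1
        | linear_combination -2*hU1
        | ring
  have hUnit2 : U * star U = 1 := by
    rw [hstar]
    ext i j
    fin_cases i <;> fin_cases j <;>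
      simp [hUdef, Matrix.mul_apply, Fin.sum_univ_two, Matrix.one_apply] <;>
      first
        | linear_combination hU1
        | linear_combination -hU1
        | linear_combination 2*hU1
        | linear_combination -2*hU1
        | ring
  have hmem : U ∈ Matrix.unitaryGroup (Fin 2) ℂ :=
    Matrix.mem_unitaryGroup_iff.mpr hUnit2
  have hinv : U⁻¹ = star U := Matrix.inv_eq_left_inv hUnit
  have e1 : ψ 1 = 0 := by have := congrFun (congrFun hA 0) 1; simpa [q3T0] using this
  have e2 : ψ 2 = 0 := by have := congrFun (congrFun hA 1) 0; simpa [q3T0] using this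
  have e3 : ψ 3 = 0 := by have := congrFun (congrFun hA 1) 1; simpa [q3T0] using this
  set φ : Fin 8 → ℂ := (kron3 1 1 U).mulVec ψ with hφdef
  have simpset := 0
  have hφ0 : φ 0 = u * ψ 0 := by
    simp [hφdef, kron3, Matrix.mulVec, dotProduct, Fin.sum_univ_eight, Matrix.one_apply,
      hUdef, e1, e2, e3, bit0_0, bit1_0, bit2_0, bit0_1, bit1_1, bit2_1, bit0_2, bit1_2, bit2_2,
      bit0_3, bit1_3, bit2_3, bit0_4, bit1_4, bit2_4, bit0_5, bit1_5, bit2_5,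
      bit0_6, bit1_6, bit2_6, bit0_7, bit1_7, bit2_7]
  have hφ1 : φ 1 = v * ψ 0 := by
    simp [hφdef, kron3, Matrix.mulVec, dotProduct, Fin.sum_univ_eight, Matrix.one_apply,
      hUdef, e1, e2, e3, bit0_0, bit1_0, bit2_0, bit0_1, bit1_1, bit2_1, bit0_2, bit1_2, bit2_2,
      bit0_3, bit1_3, bit2_3, bit0_4, bit1_4, bit2_4, bit0_5, bit1_5, bit2_5,
      bit0_6, bit1_6, bit2_6, bit0_7, bit1_7, bit2_7]
  have hφ2 : φ 2 = 0 := by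
    simp [hφdef, kron3, Matrix.mulVec, dotProduct, Fin.sum_univ_eight, Matrix.one_apply,
      hUdef, e1, e2, e3, bit0_0, bit1_0, bit2_0, bit0_1, bit1_1, bit2_1, bit0_2, bit1_2, bit2_2,
      bit0_3, bit1_3, bit2_3, bit0_4, bit1_4, bit2_4, bit0_5, bit1_5, bit2_5,
      bit0_6, bit1_6, bit2_6, bit0_7, bit1_7, bit2_7]
  have hφ3 : φ 3 = 0 := by
    simp [hφdef, kron3, Matrix.mulVec, dotProduct, Fin.sum_univ_eight, Matrix.one_apply,
      hUdef, e1, e2, e3, bit0_0, bit1_0, bit2_0, bit0_1, bit1_1, bit2_1, bit0_2, bit1_2, bit2_2,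
      bit0_3, bit1_3, bit2_3, bit0_4, bit1_4, bit2_4, bit0_5, bit1_5, bit2_5,
      bit0_6, bit1_6, bit2_6, bit0_7, bit1_7, bit2_7]
  have hφ4 : φ 4 = u * ψ 4 - conj v * ψ 5 := by
    simp [hφdef, kron3, Matrix.mulVec, dotProduct, Fin.sum_univ_eight, Matrix.one_apply,
      hUdef, e1, e2, e3, bit0_0, bit1_0, bit2_0, bit0_1, bit1_1, bit2_1, bit0_2, bit1_2, bit2_2,
      bit0_3, bit1_3, bit2_3, bit0_4, bit1_4, bit2_4, bit0_5, bit1_5, bit2_5,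
      bit0_6, bit1_6, bit2_6, bit0_7, bit1_7, bit2_7]
    all_goals ring
  have hφ5 : φ 5 = v * ψ 4 + u * ψ 5 := by
    simp [hφdef, kron3, Matrix.mulVec, dotProduct, Fin.sum_univ_eight, Matrix.one_apply,
      hUdef, e1, e2, e3, bit0_0, bit1_0, bit2_0, bit0_1, bit1_1, bit2_1, bit0_2, bit1_2, bit2_2,
      bit0_3, bit1_3, bit2_3, bit0_4, bit1_4, bit2_4, bit0_5, bit1_5, bit2_5,
      bit0_6, bit1_6, bit2_6, bit0_7, bit1_7, bit2_7]
    all_goals ring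
  have hφ6 : φ 6 = u * ψ 6 - conj v * ψ 7 := by
    simp [hφdef, kron3, Matrix.mulVec, dotProduct, Fin.sum_univ_eight, Matrix.one_apply,
      hUdef, e1, e2, e3, bit0_0, bit1_0, bit2_0, bit0_1, bit1_1, bit2_1, bit0_2, bit1_2, bit2_2,
      bit0_3, bit1_3, bit2_3, bit0_4, bit1_4, bit2_4, bit0_5, bit1_5, bit2_5,
      bit0_6, bit1_6, bit2_6, bit0_7, bit1_7, bit2_7]
    all_goals ring
  have hφ7 : φ 7 = v * ψ 6 + u * ψ 7 := by
    simp [hφdef, kron3, Matrix.mulVec, dotProduct, Fin.sum_univ_eight, Matrix.one_apply,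
      hUdef, e1, e2, e3, bit0_0, bit1_0, bit2_0, bit0_1, bit1_1, bit2_1, bit0_2, bit1_2, bit2_2,
      bit0_3, bit1_3, bit2_3, bit0_4, bit1_4, bit2_4, bit0_5, bit1_5, bit2_5,
      bit0_6, bit1_6, bit2_6, bit0_7, bit1_7, bit2_7]
    all_goals ring
  set χ : Fin 8 → ℂ := cz01.mulVec φ with hχdef
  have hχ0 : χ 0 = φ 0 := by
    simp [hχdef, cz01, Matrix.mulVec_diagonal,
      show (![1,1,1,-1,1,1,1,-1] : Fin 8 → ℂ) 0 = 1 from rfl]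
  have hχ1 : χ 1 = φ 1 := by
    simp [hχdef, cz01, Matrix.mulVec_diagonal,
      show (![1,1,1,-1,1,1,1,-1] : Fin 8 → ℂ) 1 = 1 from rfl]
  have hχ2 : χ 2 = φ 2 := by
    simp [hχdef, cz01, Matrix.mulVec_diagonal,
      show (![1,1,1,-1,1,1,1,-1] : Fin 8 → ℂ) 2 = 1 from rfl]
  have hχ3 : χ 3 = -φ 3 := by
    simp [hχdef, cz01, Matrix.mulVec_diagonal,
      show (![1,1,1,-1,1,1,1,-1] : Fin 8 → ℂ) 3 = -1 from rfl]
  have hχ4 : χ 4 = φ 4 := by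
    simp [hχdef, cz01, Matrix.mulVec_diagonal,
      show (![1,1,1,-1,1,1,1,-1] : Fin 8 → ℂ) 4 = 1 from rfl]
  have hχ5 : χ 5 = φ 5 := by
    simp [hχdef, cz01, Matrix.mulVec_diagonal,
      show (![1,1,1,-1,1,1,1,-1] : Fin 8 → ℂ) 5 = 1 from rfl]
  have hχ6 : χ 6 = φ 6 := by
    simp [hχdef, cz01, Matrix.mulVec_diagonal,
      show (![1,1,1,-1,1,1,1,-1] : Fin 8 → ℂ) 6 = 1 from rfl]
  have hχ7 : χ 7 = -φ 7 := by
    simp [hχdef, cz01, Matrix.mulVec_diagonal,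
      show (![1,1,1,-1,1,1,1,-1] : Fin 8 → ℂ) 7 = -1 from rfl]
  refine ⟨U, hmem, ?_, ?_, ?_, ?_⟩ <;>
    rw [show (kron3 1 1 U⁻¹ * cz01 * kron3 1 1 U) *ᵥ ψ = kron3 1 1 (star U) *ᵥ χ by
      rw [hinv, hχdef, hφdef, Matrix.mulVec_mulVec, Matrix.mulVec_mulVec]]
  · simp only [q3T0, Matrix.cons_val', Matrix.cons_val_zero, Matrix.cons_val_one,
      Matrix.head_cons, Matrix.empty_val', Matrix.cons_val_fin_one, Matrix.head_fin_const]
    simp [kron3, Matrix.mulVec, dotProduct, Fin.sum_univ_eight, Matrix.one_apply, hstar, hUdef, Complex.conj_ofReal,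
      bit0_0, bit1_0, bit2_0, bit0_1, bit1_1, bit2_1, bit0_2, bit1_2, bit2_2,
      bit0_3, bit1_3, bit2_3, bit0_4, bit1_4, bit2_4, bit0_5, bit1_5, bit2_5,
      bit0_6, bit1_6, bit2_6, bit0_7, bit1_7, bit2_7, hχ0, hχ1, hφ0, hφ1]
    all_goals ring
  · simp only [q3T0, Matrix.cons_val', Matrix.cons_val_zero, Matrix.cons_val_one,
      Matrix.head_cons, Matrix.empty_val', Matrix.cons_val_fin_one, Matrix.head_fin_const]
    simp [kron3, Matrix.mulVec, dotProduct, Fin.sum_univ_eight, Matrix.one_apply, hstar, hUdef, Complex.conj_ofReal,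
      bit0_0, bit1_0, bit2_0, bit0_1, bit1_1, bit2_1, bit0_2, bit1_2, bit2_2,
      bit0_3, bit1_3, bit2_3, bit0_4, bit1_4, bit2_4, bit0_5, bit1_5, bit2_5,
      bit0_6, bit1_6, bit2_6, bit0_7, bit1_7, bit2_7, hχ2, hχ3, hφ2, hφ3]
  · simp only [q3T0, Matrix.cons_val', Matrix.cons_val_zero, Matrix.cons_val_one,
      Matrix.head_cons, Matrix.empty_val', Matrix.cons_val_fin_one, Matrix.head_fin_const]
    simp [kron3, Matrix.mulVec, dotProduct, Fin.sum_univ_eight, Matrix.one_apply, hstar, hUdef, Complex.conj_ofReal,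
      bit0_0, bit1_0, bit2_0, bit0_1, bit1_1, bit2_1, bit0_2, bit1_2, bit2_2,
      bit0_3, bit1_3, bit2_3, bit0_4, bit1_4, bit2_4, bit0_5, bit1_5, bit2_5,
      bit0_6, bit1_6, bit2_6, bit0_7, bit1_7, bit2_7, hχ2, hχ3, hφ2, hφ3]
  · simp only [q3T1, Matrix.det_fin_two, Matrix.cons_val', Matrix.cons_val_zero,
      Matrix.cons_val_one, Matrix.head_cons, Matrix.empty_val', Matrix.cons_val_fin_one,
      Matrix.head_fin_const]
    simp [kron3, Matrix.mulVec, dotProduct, Fin.sum_univ_eight, Matrix.one_apply, hstar, hUdef, Complex.conj_ofReal,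
      bit0_0, bit1_0, bit2_0, bit0_1, bit1_1, bit2_1, bit0_2, bit1_2, bit2_2,
      bit0_3, bit1_3, bit2_3, bit0_4, bit1_4, bit2_4, bit0_5, bit1_5, bit2_5,
      bit0_6, bit1_6, bit2_6, bit0_7, bit1_7, bit2_7, hχ4, hχ5, hχ6, hχ7, hφ4, hφ5, hφ6, hφ7]
    all_goals linear_combination (-((u:ℂ)*u + v*conj v)) * hC
end
end
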